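/- arXiv:1907.06750 — 9 statements merged into one kernel-verified Lean document; each statement's English description precedes it below -/
import Mathlib

section
/- Let n ∈ ℝ³ be a unit vector and z ∈ ℝ³ with z ≠ 0. Then lim_{r→∞} ∫_{ℝ³} (r² n·(rz − y)) / (4π |rz − y|³) · j₀(y) dy = q n·z / (4π |z|³). -/
open MeasureTheory Filter Topology Real Set Metric
open scoped InnerProductSpace

noncomputable section

local notation "ℝ³" => EuclideanSpace ℝ (Fin 3)

/-- The pointwise large-distance limit of the smeared radial flux of the Coulomb field:
for a unit vector `n` and `z ≠ 0`,
`lim_{r→∞} ∫ (r² n·(rz − y)) / (4π |rz − y|³) j₀(y) dy = q n·z / (4π |z|³)`. -/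
theorem stmt_0 (j₀ : ℝ³ → ℝ) (hj : ContDiff ℝ (⊤ : ℕ∞) j₀) (hjc : HasCompactSupport j₀)
    (n z : ℝ³) (hn : ‖n‖ = 1) (hz : z ≠ 0) :
    Tendsto (fun r : ℝ => ∫ y : ℝ³,
        (r ^ 2 * ⟪n, r • z - y⟫_ℝ) / (4 * π * ‖r • z - y‖ ^ 3) * j₀ y)
      atTop
      (𝓝 ((∫ x : ℝ³, j₀ x) * ⟪n, z⟫_ℝ / (4 * π * ‖z‖ ^ 3))) := by
  have hπ : (0:ℝ) < π := Real.pi_pos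
  have hznorm : (0:ℝ) < ‖z‖ := norm_pos_iff.mpr hz
  obtain ⟨R, hR0, hR⟩ : ∃ R : ℝ, 0 ≤ R ∧ tsupport j₀ ⊆ closedBall 0 R := by
    obtain ⟨R, hR⟩ := hjc.isCompact.isBounded.subset_closedBall 0
    exact ⟨max R 0, le_max_right _ _,
      hR.trans (closedBall_subset_closedBall (le_max_left _ _))⟩
  -- pointwise limit of the kernel
  have key : ∀ y : ℝ³, Tendsto (fun r : ℝ =>
      (r ^ 2 * ⟪n, r • z - y⟫_ℝ) / (4 * π * ‖r • z - y‖ ^ 3)) atTop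
      (𝓝 (⟪n, z⟫_ℝ / (4 * π * ‖z‖ ^ 3))) := by
    intro y
    have hF : Tendsto (fun t : ℝ =>
        (⟪n, z⟫_ℝ - t * ⟪n, y⟫_ℝ) / (4 * π * ‖z - t • y‖ ^ 3)) (𝓝 0)
        (𝓝 (⟪n, z⟫_ℝ / (4 * π * ‖z‖ ^ 3))) := by
      have hnum : Tendsto (fun t : ℝ => ⟪n, z⟫_ℝ - t * ⟪n, y⟫_ℝ) (𝓝 0)
          (𝓝 (⟪n, z⟫_ℝ)) := by
        have : Continuous fun t : ℝ => ⟪n, z⟫_ℝ - t * ⟪n, y⟫_ℝ := by continuity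
        simpa using this.tendsto 0
      have hden : Tendsto (fun t : ℝ => 4 * π * ‖z - t • y‖ ^ 3) (𝓝 0)
          (𝓝 (4 * π * ‖z‖ ^ 3)) := by
        have : Continuous fun t : ℝ => 4 * π * ‖z - t • y‖ ^ 3 :=
          continuous_const.mul
            (((continuous_const.sub (continuous_id.smul continuous_const)).norm).pow 3)
        simpa using this.tendsto 0
      exact hnum.div hden (by positivity)
    have hcomp := hF.comp tendsto_inv_atTop_zero
    refine Tendsto.congr' ?_ hcomp
    filter_upwards [eventually_gt_atTop 0] with r hr
    have hr0 : r ≠ 0 := ne_of_gt hr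
    have hsm : r • z - y = r • (z - r⁻¹ • y) := by
      rw [smul_sub, smul_smul, mul_inv_cancel₀ hr0, one_smul]
    have hnormeq : ‖r • z - y‖ = r * ‖z - r⁻¹ • y‖ := by
      rw [hsm, norm_smul, Real.norm_eq_abs, abs_of_pos hr]
    have hinner : ⟪n, r • z - y⟫_ℝ = r * (⟪n, z⟫_ℝ - r⁻¹ * ⟪n, y⟫_ℝ) := by
      rw [hsm, real_inner_smul_right, inner_sub_right, real_inner_smul_right]
    simp only [Function.comp]
    rw [hnormeq, hinner]
    rw [show r ^ 2 * (r * (⟪n, z⟫_ℝ - r⁻¹ * ⟪n, y⟫_ℝ)) =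
        r ^ 3 * (⟪n, z⟫_ℝ - r⁻¹ * ⟪n, y⟫_ℝ) by ring,
      show 4 * π * (r * ‖z - r⁻¹ • y‖) ^ 3 =
        r ^ 3 * (4 * π * ‖z - r⁻¹ • y‖ ^ 3) by ring,
      mul_div_mul_left _ _ (pow_ne_zero 3 hr0)]
  -- dominated convergence
  set C : ℝ := 1 / (π * ‖z‖ ^ 2) with hC
  have hmeas : ∀ r : ℝ, AEStronglyMeasurable (fun y : ℝ³ =>
      (r ^ 2 * ⟪n, r • z - y⟫_ℝ) / (4 * π * ‖r • z - y‖ ^ 3) * j₀ y)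
      (volume : Measure ℝ³) := by
    intro r
    apply Measurable.aestronglyMeasurable
    exact ((measurable_const.mul
        ((Continuous.inner continuous_const (continuous_const.sub continuous_id)).measurable)).div
        ((continuous_const.mul
          ((continuous_const.sub continuous_id).norm.pow 3)).measurable)).mul
      hj.continuous.measurable
  have hbound_int : Integrable (fun y : ℝ³ => C * |j₀ y|) := by
    exact ((hj.continuous.abs.integrable_of_hasCompactSupport hjc.abs)).const_mul C
  have hbound : ∀ᶠ r : ℝ in atTop, ∀ᵐ y : ℝ³,
      ‖(r ^ 2 * ⟪n, r • z - y⟫_ℝ) / (4 * π * ‖r • z - y‖ ^ 3) * j₀ y‖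
        ≤ C * |j₀ y| := by
    filter_upwards [eventually_ge_atTop (max 1 (2 * R / ‖z‖))] with r hr
    refine Filter.Eventually.of_forall fun y => ?_
    have hr1 : (1:ℝ) ≤ r := le_trans (le_max_left _ _) hr
    have hr0 : (0:ℝ) < r := lt_of_lt_of_le one_pos hr1
    have hrz : 2 * R ≤ r * ‖z‖ := by
      have := le_trans (le_max_right 1 (2 * R / ‖z‖)) hr
      rwa [div_le_iff₀ hznorm] at this
    by_cases hy : j₀ y = 0
    · simp [hy]
    · have hyR : ‖y‖ ≤ R := by
        have : y ∈ tsupport j₀ := subset_tsupport _ hy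
        simpa using hR this
      set D := ‖r • z - y‖ with hD
      have hDge : r * ‖z‖ / 2 ≤ D := by
        have h1 : ‖r • z‖ - ‖y‖ ≤ D := by
          simpa [hD] using norm_sub_norm_le (r • z) y
        have h2 : ‖r • z‖ = r * ‖z‖ := by
          rw [norm_smul, Real.norm_eq_abs, abs_of_pos hr0]
        nlinarith
      have hDpos : 0 < D := lt_of_lt_of_le (by positivity) hDge
      have hinner : |⟪n, r • z - y⟫_ℝ| ≤ D := by
        have := abs_real_inner_le_norm n (r • z - y)
        simpa [hn, hD] using this
      rw [norm_mul, Real.norm_eq_abs, Real.norm_eq_abs]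
      refine mul_le_mul_of_nonneg_right ?_ (abs_nonneg _)
      rw [abs_div, abs_of_pos (by positivity : (0:ℝ) < 4 * π * D ^ 3),
        div_le_iff₀ (by positivity : (0:ℝ) < 4 * π * D ^ 3)]
      have h3 : |r ^ 2 * ⟪n, r • z - y⟫_ℝ| ≤ r ^ 2 * D := by
        rw [abs_mul, abs_of_pos (by positivity : (0:ℝ) < r ^ 2)]
        exact mul_le_mul_of_nonneg_left hinner (by positivity)
      refine le_trans h3 ?_
      rw [hC]
      rw [div_mul_eq_mul_div, le_div_iff₀ (by positivity : (0:ℝ) < π * ‖z‖ ^ 2)]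
      have h4 : r * ‖z‖ ≤ 2 * D := by linarith
      have h5 : (r * ‖z‖) * (r * ‖z‖) ≤ (2 * D) * (2 * D) :=
        mul_le_mul h4 h4 (by positivity) (by positivity)
      nlinarith [mul_le_mul_of_nonneg_left h5 (le_of_lt (mul_pos hπ hDpos))]
  have hlim : ∀ᵐ y : ℝ³, Tendsto (fun r : ℝ =>
      (r ^ 2 * ⟪n, r • z - y⟫_ℝ) / (4 * π * ‖r • z - y‖ ^ 3) * j₀ y) atTop
      (𝓝 (⟪n, z⟫_ℝ / (4 * π * ‖z‖ ^ 3) * j₀ y)) :=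
    Filter.Eventually.of_forall fun y => (key y).mul_const _
  have main := tendsto_integral_filter_of_dominated_convergence
    (μ := (volume : Measure ℝ³)) (fun y => C * |j₀ y|)
    (Filter.Eventually.of_forall hmeas) hbound hbound_int hlim
  have : ∫ y : ℝ³, ⟪n, z⟫_ℝ / (4 * π * ‖z‖ ^ 3) * j₀ y =
      (∫ x : ℝ³, j₀ x) * ⟪n, z⟫_ℝ / (4 * π * ‖z‖ ^ 3) := by
    rw [integral_const_mul]; ring
  rwa [this] at main
end
end

section
/- Let n ∈ ℝ³ be a unit vector and let 0 < δ < 1. For every smooth compactly supported f : ℝ³ → ℝ with support contained in the open ball B(0,δ), one has lim_{r→∞} ∫_{ℝ³} f(x) [ ∫_{ℝ³} (r² n·(rn + rx − y)) / (4π |rn + rx − y|³) · j₀(y) dy ] dx = ∫_{ℝ³} f(x) · q n·(n+x) / (4π |n+x|³) dx. -/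
open MeasureTheory Filter Topology Real Set Metric
open scoped InnerProductSpace

noncomputable section

local notation "ℝ³" => EuclideanSpace ℝ (Fin 3)

set_option maxHeartbeats 1000000 in
/-- Coulomb-gauge flux smeared with the scaled test function `f_{el,n,r}`. -/
theorem stmt_1 (j₀ : ℝ³ → ℝ) (hj : ContDiff ℝ (⊤ : ℕ∞) j₀) (hjc : HasCompactSupport j₀)
    (n : ℝ³) (hn : ‖n‖ = 1) (δ : ℝ) (hδ0 : 0 < δ) (hδ1 : δ < 1)
    (f : ℝ³ → ℝ) (hf : ContDiff ℝ (⊤ : ℕ∞) f)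
    (hsupp : Function.support f ⊆ Metric.ball (0 : ℝ³) δ) :
    Tendsto (fun r : ℝ => ∫ x : ℝ³, f x * ∫ y : ℝ³,
        (r ^ 2 * ⟪n, r • n + r • x - y⟫_ℝ) / (4 * π * ‖r • n + r • x - y‖ ^ 3) * j₀ y)
      atTop
      (𝓝 (∫ x : ℝ³, f x * ((∫ y : ℝ³, j₀ y) * ⟪n, n + x⟫_ℝ / (4 * π * ‖n + x‖ ^ 3)))) := by
  have hπ : (0:ℝ) < π := Real.pi_pos
  have hj₀c : Continuous j₀ := hj.continuous
  have hj₀i : Integrable j₀ := hj₀c.integrable_of_hasCompactSupport hjc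
  obtain ⟨R, hR0, hR⟩ : ∃ R > 0, Function.support j₀ ⊆ closedBall (0:ℝ³) R := by
    obtain ⟨R, hR⟩ := hjc.isBounded.subset_closedBall (0:ℝ³)
    exact ⟨max R 1, by positivity,
      (subset_tsupport j₀).trans (hR.trans (closedBall_subset_closedBall (le_max_left _ _)))⟩
  set ε : ℝ := 1 - δ with hεdef
  have hε0 : 0 < ε := by simp only [hεdef]; linarith
  -- the kernel φ
  set φ : ℝ³ → ℝ := fun w => ⟪n, w⟫_ℝ / (4 * π * ‖w‖ ^ 3) with hφdef
  have hφbound : ∀ c : ℝ, 0 < c → ∀ w : ℝ³, c ≤ ‖w‖ → |φ w| ≤ 1 / (4 * π * c ^ 2) := by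
    intro c hc w hw
    have hw0 : 0 < ‖w‖ := lt_of_lt_of_le hc hw
    have h1 : |⟪n, w⟫_ℝ| ≤ ‖w‖ := by
      calc |⟪n, w⟫_ℝ| ≤ ‖n‖ * ‖w‖ := abs_real_inner_le_norm n w
        _ = ‖w‖ := by rw [hn, one_mul]
    have hden : (0:ℝ) < 4 * π * ‖w‖ ^ 3 := by positivity
    rw [hφdef, abs_div, abs_of_pos hden]
    rw [div_le_div_iff₀ hden (by positivity)]
    calc |⟪n, w⟫_ℝ| * (4 * π * c ^ 2) ≤ ‖w‖ * (4 * π * ‖w‖ ^ 2) := by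
          apply mul_le_mul h1 _ (by positivity) hw0.le
          have : c ^ 2 ≤ ‖w‖ ^ 2 := by nlinarith
          nlinarith
      _ = 1 * (4 * π * ‖w‖ ^ 3) := by ring
  have hφmeas : Measurable φ := by
    apply Measurable.div
    · exact (Continuous.inner continuous_const continuous_id).measurable
    · exact (continuous_const.mul ((continuous_norm).pow 3)).measurable
  have hφcont : ∀ w : ℝ³, w ≠ 0 → ContinuousAt φ w := by
    intro w hw
    apply ContinuousAt.div
    · exact (Continuous.inner continuous_const continuous_id).continuousAt
    · exact (continuous_const.mul ((continuous_norm).pow 3)).continuousAt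
    · have : (0:ℝ) < ‖w‖ := norm_pos_iff.2 hw
      positivity
  -- rewriting the integrand for positive r
  have hrw : ∀ r : ℝ, 0 < r → ∀ x y : ℝ³,
      (r ^ 2 * ⟪n, r • n + r • x - y⟫_ℝ) / (4 * π * ‖r • n + r • x - y‖ ^ 3) * j₀ y
      = φ ((n + x) - r⁻¹ • y) * j₀ y := by
    intro r hr x y
    have hsm : r • n + r • x - y = r • ((n + x) - r⁻¹ • y) := by
      rw [smul_sub, smul_smul, mul_inv_cancel₀ hr.ne', one_smul, smul_add]
    congr 1
    rw [hsm, real_inner_smul_right, norm_smul, Real.norm_eq_abs, abs_of_pos hr,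
      mul_pow, hφdef]
    have : r ^ 2 * (r * ⟪n, (n + x) - r⁻¹ • y⟫_ℝ) =
        r ^ 3 * ⟪n, (n + x) - r⁻¹ • y⟫_ℝ := by ring
    rw [this]
    have : 4 * π * (r ^ 3 * ‖(n + x) - r⁻¹ • y‖ ^ 3) =
        r ^ 3 * (4 * π * ‖(n + x) - r⁻¹ • y‖ ^ 3) := by ring
    rw [this, mul_div_mul_left _ _ (by positivity : (r:ℝ) ^ 3 ≠ 0)]
  -- norm lower bound on the support of f
  have hzlb : ∀ x : ℝ³, f x ≠ 0 → ε ≤ ‖n + x‖ := by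
    intro x hx
    have hxδ : ‖x‖ < δ := by
      have := hsupp hx
      simpa [Metric.mem_ball, dist_eq_norm] using this
    have : ‖n‖ ≤ ‖n + x‖ + ‖x‖ := by
      calc ‖n‖ = ‖(n + x) - x‖ := by congr 1; abel
        _ ≤ ‖n + x‖ + ‖x‖ := norm_sub_le _ _
    rw [hn] at this
    simp only [hεdef]; linarith
  -- constants
  set C : ℝ := 1 / (4 * π * (ε / 2) ^ 2) with hCdef
  have hC0 : 0 < C := by rw [hCdef]; positivity
  set J : ℝ := ∫ y : ℝ³, |j₀ y| with hJdef
  have hJ0 : 0 ≤ J := by rw [hJdef]; positivity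
  set r₀ : ℝ := max 1 (2 * R / ε) with hr₀def
  -- key bound on shifted argument
  have hshift : ∀ r : ℝ, r₀ ≤ r → ∀ x : ℝ³, ε ≤ ‖n + x‖ → ∀ y : ℝ³, ‖y‖ ≤ R →
      ε / 2 ≤ ‖(n + x) - r⁻¹ • y‖ := by
    intro r hr x hx y hy
    have hr1 : (1:ℝ) ≤ r := le_trans (le_max_left _ _) hr
    have hr0 : (0:ℝ) < r := lt_of_lt_of_le one_pos hr1
    have hrR : 2 * R / ε ≤ r := le_trans (le_max_right _ _) hr
    have hinv : ‖r⁻¹ • y‖ ≤ ε / 2 := by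
      rw [norm_smul, Real.norm_eq_abs, abs_of_pos (by positivity : (0:ℝ) < r⁻¹)]
      have h2R : 2 * R ≤ ε * r := by
        rw [div_le_iff₀ hε0] at hrR; linarith [hrR]
      rw [inv_mul_le_iff₀ hr0]
      nlinarith
    calc ε / 2 = ε - ε / 2 := by ring
      _ ≤ ‖n + x‖ - ‖r⁻¹ • y‖ := by linarith
      _ ≤ ‖(n + x) - r⁻¹ • y‖ := by
          have := norm_sub_norm_le (n + x) (r⁻¹ • y)
          linarith
  -- pointwise bound on the rewritten integrand
  have hptbd : ∀ r : ℝ, r₀ ≤ r → ∀ x : ℝ³, ε ≤ ‖n + x‖ → ∀ y : ℝ³,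
      ‖φ ((n + x) - r⁻¹ • y) * j₀ y‖ ≤ C * |j₀ y| := by
    intro r hr x hx y
    by_cases hy : j₀ y = 0
    · simp [hy]
    · have hyR : ‖y‖ ≤ R := by
        have := hR (Function.mem_support.2 hy)
        simpa [Metric.mem_closedBall, dist_eq_norm] using this
      rw [norm_mul, Real.norm_eq_abs, Real.norm_eq_abs]
      apply mul_le_mul_of_nonneg_right _ (abs_nonneg _)
      exact hφbound (ε/2) (by positivity) _ (hshift r hr x hx y hyR)
  have hCJi : Integrable (fun y : ℝ³ => C * |j₀ y|) := (hj₀i.abs).const_mul C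
  -- bound on the inner integral
  have hinner_bd : ∀ r : ℝ, r₀ ≤ r → ∀ x : ℝ³, f x ≠ 0 →
      ‖∫ y : ℝ³, (r ^ 2 * ⟪n, r • n + r • x - y⟫_ℝ) /
        (4 * π * ‖r • n + r • x - y‖ ^ 3) * j₀ y‖ ≤ C * J := by
    intro r hr x hx
    have hr0 : (0:ℝ) < r := lt_of_lt_of_le one_pos (le_trans (le_max_left _ _) hr)
    have hx' := hzlb x hx
    calc ‖∫ y : ℝ³, (r ^ 2 * ⟪n, r • n + r • x - y⟫_ℝ) /
          (4 * π * ‖r • n + r • x - y‖ ^ 3) * j₀ y‖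
        = ‖∫ y : ℝ³, φ ((n + x) - r⁻¹ • y) * j₀ y‖ := by
          congr 1; exact integral_congr_ae (Filter.Eventually.of_forall (hrw r hr0 x))
      _ ≤ ∫ y : ℝ³, ‖φ ((n + x) - r⁻¹ • y) * j₀ y‖ := norm_integral_le_integral_norm _
      _ ≤ ∫ y : ℝ³, C * |j₀ y| := by
          apply integral_mono_of_nonneg (Filter.Eventually.of_forall fun y => norm_nonneg _)
            hCJi (Filter.Eventually.of_forall fun y => hptbd r hr x hx' y)
      _ = C * J := by rw [hJdef, integral_const_mul]
  -- integrability of f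
  have hfc : HasCompactSupport f := by
    apply HasCompactSupport.intro (isCompact_closedBall (0:ℝ³) δ)
    intro x hx
    by_contra h
    exact hx (ball_subset_closedBall (hsupp (Function.mem_support.2 h)))
  have hfi : Integrable f := hf.continuous.integrable_of_hasCompactSupport hfc
  -- outer dominated convergence
  apply tendsto_integral_filter_of_dominated_convergence (fun x : ℝ³ => ‖f x‖ * (C * J))
  · -- measurability
    apply Filter.Eventually.of_forall
    intro r
    apply (hf.continuous.aestronglyMeasurable).mul
    apply StronglyMeasurable.aestronglyMeasurable
    apply MeasureTheory.StronglyMeasurable.integral_prod_right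
      (f := fun (x : ℝ³) (y : ℝ³) => (r ^ 2 * ⟪n, r • n + r • x - y⟫_ℝ) /
        (4 * π * ‖r • n + r • x - y‖ ^ 3) * j₀ y)
    apply Measurable.stronglyMeasurable
    have hc1 : Continuous (fun p : ℝ³ × ℝ³ => r • n + r • p.1 - p.2) := by
      exact ((continuous_const.add (continuous_fst.const_smul r)).sub continuous_snd)
    apply Measurable.mul
    · apply Measurable.div
      · exact (continuous_const.mul (Continuous.inner continuous_const hc1)).measurable
      · exact (continuous_const.mul ((hc1.norm).pow 3)).measurable
    · exact (hj₀c.comp continuous_snd).measurable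
  · -- domination
    filter_upwards [Filter.eventually_ge_atTop r₀] with r hr
    apply Filter.Eventually.of_forall
    intro x
    by_cases hx : f x = 0
    · simp [hx]
    · rw [norm_mul]
      exact mul_le_mul_of_nonneg_left (hinner_bd r hr x hx) (norm_nonneg _)
  · exact (hfi.norm).mul_const _
  · -- pointwise convergence
    apply Filter.Eventually.of_forall
    intro x
    by_cases hx : f x = 0
    · simp only [hx, zero_mul]
      exact tendsto_const_nhds
    · have hx' := hzlb x hx
      have hz0 : (n + x) ≠ 0 := by
        intro h; rw [h, norm_zero] at hx'; linarith
      apply Tendsto.const_mul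
      -- inner convergence
      have key : Tendsto (fun r : ℝ => ∫ y : ℝ³, φ ((n + x) - r⁻¹ • y) * j₀ y) atTop
          (𝓝 (∫ y : ℝ³, φ (n + x) * j₀ y)) := by
        apply tendsto_integral_filter_of_dominated_convergence (fun y : ℝ³ => C * |j₀ y|)
        · apply Filter.Eventually.of_forall
          intro r
          apply AEStronglyMeasurable.mul _ hj₀c.aestronglyMeasurable
          apply Measurable.aestronglyMeasurable
          exact hφmeas.comp ((continuous_const.sub (continuous_id.const_smul r⁻¹)).measurable)
        · filter_upwards [Filter.eventually_ge_atTop r₀] with r hr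
          exact Filter.Eventually.of_forall fun y => hptbd r hr x hx' y
        · exact hCJi
        · apply Filter.Eventually.of_forall
          intro y
          apply Tendsto.mul_const
          apply (hφcont _ hz0).tendsto.comp
          have : Tendsto (fun r : ℝ => r⁻¹ • y) atTop (𝓝 (0 : ℝ³)) := by
            have := (tendsto_inv_atTop_zero (𝕜 := ℝ)).smul_const y
            simpa using this
          have h2 : Tendsto (fun r : ℝ => (n + x) - r⁻¹ • y) atTop (𝓝 ((n + x) - 0)) :=
            tendsto_const_nhds.sub this
          simpa using h2
      have heqI : ∀ᶠ r : ℝ in atTop,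
          (∫ y : ℝ³, (r ^ 2 * ⟪n, r • n + r • x - y⟫_ℝ) /
            (4 * π * ‖r • n + r • x - y‖ ^ 3) * j₀ y)
          = ∫ y : ℝ³, φ ((n + x) - r⁻¹ • y) * j₀ y := by
        filter_upwards [Filter.eventually_gt_atTop (0:ℝ)] with r hr
        exact integral_congr_ae (Filter.Eventually.of_forall (hrw r hr x))
      have hval : (∫ y : ℝ³, φ (n + x) * j₀ y)
          = (∫ y : ℝ³, j₀ y) * ⟪n, n + x⟫_ℝ / (4 * π * ‖n + x‖ ^ 3) := by
        rw [integral_const_mul, hφdef]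
        ring
      rw [← hval]
      exact Tendsto.congr' (heqI.mono fun r h => h.symm) key
end
end

section
/- Let n, e ∈ ℝ³ be unit vectors with n ≠ e and let j₀ : ℝ³ → ℝ be smooth and compactly supported. Then there exist δ ∈ (0,1) and R > 0 such that for every smooth f : ℝ³ → ℝ supported in the ball B(0,δ) and every r ≥ R, ∫_{ℝ³} f(x) · r² (n·e) [ ∫₀^∞ j₀(r(n+x) − se) ds ] dx = 0. -/
open MeasureTheory Filter Topology Real Set Metric
open scoped InnerProductSpace

noncomputable section

local notation "ℝ³" => EuclideanSpace ℝ (Fin 3)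

/-- The asymptotic flux in the axial gauge with axis `e` vanishes in every direction `n ≠ e`. -/
theorem stmt_6 (j₀ : ℝ³ → ℝ) (hj : ContDiff ℝ (⊤ : ℕ∞) j₀) (hjc : HasCompactSupport j₀)
    (n e : ℝ³) (hn : ‖n‖ = 1) (he : ‖e‖ = 1) (hne : n ≠ e) :
    ∃ δ ∈ Ioo (0 : ℝ) 1, ∃ R > (0 : ℝ), ∀ f : ℝ³ → ℝ, ContDiff ℝ (⊤ : ℕ∞) f →
      Function.support f ⊆ Metric.ball (0 : ℝ³) δ → ∀ r ≥ R,
      (∫ x : ℝ³, f x * (r ^ 2 * ⟪n, e⟫_ℝ *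
        ∫ s in Ioi (0 : ℝ), j₀ (r • (n + x) - s • e))) = 0 := by
  obtain ⟨M, hM⟩ := hjc.isBounded.subset_closedBall 0
  set c := ⟪n, e⟫_ℝ with hcdef
  have hc1 : c < 1 := by
    have h := norm_sub_sq_real (x := n) (y := e)
    have hne' : ‖n - e‖ ≠ 0 := by
      simpa [sub_eq_zero] using hne
    have hpos : 0 < ‖n - e‖ ^ 2 := by positivity
    nlinarith [hn, he]
  set m := max c 0 with hmdef
  have hm0 : (0 : ℝ) ≤ m := le_max_right _ _
  have hm1 : m < 1 := max_lt hc1 one_pos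
  have hcm : c ≤ m := le_max_left _ _
  set ε := Real.sqrt (1 - m ^ 2) with hεdef
  have hεpos : 0 < ε := Real.sqrt_pos.2 (by nlinarith)
  have hε2 : ε ^ 2 = 1 - m ^ 2 := Real.sq_sqrt (by nlinarith)
  refine ⟨min (ε / 2) (1 / 2),
    ⟨lt_min (by positivity) (by norm_num),
      lt_of_le_of_lt (min_le_right _ _) (by norm_num)⟩,
    2 * (|M| + 1) / ε, by positivity, ?_⟩
  intro f hf hsupp r hr
  have hr0 : 0 < r := lt_of_lt_of_le (by positivity) hr
  have key : ∀ x : ℝ³, f x * (r ^ 2 * c *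
      ∫ s in Ioi (0 : ℝ), j₀ (r • (n + x) - s • e)) = 0 := by
    intro x
    by_cases hx : f x = 0
    · simp [hx]
    · have hxδ : ‖x‖ < ε / 2 := by
        have hmem := hsupp (show x ∈ Function.support f from hx)
        have : ‖x‖ < min (ε / 2) (1 / 2) := by
          simpa [Metric.mem_ball, dist_zero_right] using hmem
        exact lt_of_lt_of_le this (min_le_left _ _)
      have hinner : (∫ s in Ioi (0 : ℝ), j₀ (r • (n + x) - s • e)) = 0 := by
        apply setIntegral_eq_zero_of_forall_eq_zero
        intro s hs
        have hs0 : 0 ≤ s := le_of_lt hs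
        apply image_eq_zero_of_notMem_tsupport
        intro hmem
        have hMle : ‖r • (n + x) - s • e‖ ≤ |M| := by
          have := hM hmem
          rw [Metric.mem_closedBall, dist_zero_right] at this
          exact this.trans (le_abs_self M)
        -- lower bound on ‖r•n - s•e‖
        have h1 : (r * ε) ^ 2 ≤ ‖r • n - s • e‖ ^ 2 := by
          have hexp : ‖r • n - s • e‖ ^ 2
              = r ^ 2 - 2 * (r * s * c) + s ^ 2 := by
            rw [norm_sub_sq_real (x := r • n) (y := s • e),
              norm_smul, norm_smul, real_inner_smul_left, real_inner_smul_right,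
              hn, he]
            rw [Real.norm_eq_abs, Real.norm_eq_abs, abs_of_pos hr0, abs_of_nonneg hs0]
            rw [hcdef]
            ring_nf
          rw [hexp]
          nlinarith [sq_nonneg (s - r * m), mul_nonneg hr0.le hs0,
            mul_le_mul_of_nonneg_left hcm (mul_nonneg hr0.le hs0)]
        have h2 : r * ε ≤ ‖r • n - s • e‖ := by
          have := Real.sqrt_le_sqrt h1
          rwa [Real.sqrt_sq (by positivity), Real.sqrt_sq (norm_nonneg _)] at this
        have h3 : ‖r • n - s • e‖ ≤ ‖r • (n + x) - s • e‖ + r * ‖x‖ := by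
          have hid : r • n - s • e = (r • (n + x) - s • e) - r • x := by
            rw [smul_add]; abel
          calc ‖r • n - s • e‖ = ‖(r • (n + x) - s • e) - r • x‖ := by rw [hid]
            _ ≤ ‖r • (n + x) - s • e‖ + ‖r • x‖ := norm_sub_le _ _
            _ = ‖r • (n + x) - s • e‖ + r * ‖x‖ := by
                rw [norm_smul, Real.norm_eq_abs, abs_of_pos hr0]
        have hrε : 2 * (|M| + 1) ≤ r * ε := by
          rw [ge_iff_le, div_le_iff₀ hεpos] at hr
          linarith
        have : |M| + 1 ≤ ‖r • (n + x) - s • e‖ := by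
          nlinarith [mul_le_mul_of_nonneg_left hxδ.le hr0.le]
        linarith
      rw [hinner, mul_zero, mul_zero]
  calc (∫ x : ℝ³, f x * (r ^ 2 * c *
          ∫ s in Ioi (0 : ℝ), j₀ (r • (n + x) - s • e)))
      = ∫ _ : ℝ³, (0 : ℝ) := by simp only [key]
    _ = 0 := integral_zero _ _
end
end

section
/- Let j₀ : ℝ³ → ℝ be smooth and compactly supported with q := ∫ j₀ ≠ 0, and let n, e ∈ ℝ³ be unit vectors with n ≠ e. Then there exists δ ∈ (0,1/2) such that for every smooth nonnegative f : ℝ³ → ℝ, not identically zero, with support in B(0,δ): lim_{r→∞} ∫ f(x) [∫ (r² n·(rn + rx − y))/(4π|rn + rx − y|³) j₀(y) dy] dx ≠ 0, while for all sufficiently large r, ∫ f(x) · r²(n·e) [∫₀^∞ j₀(r(n+x) − se) ds] dx = 0. In particular the two large-r limits of the Coulomb-gauge and axial-gauge flux expressions differ. -/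
open MeasureTheory Filter Topology Real Set Metric
open scoped InnerProductSpace

noncomputable section

local notation "ℝ³" => EuclideanSpace ℝ (Fin 3)

private lemma aux_mul_cont {f g : ℝ³ → ℝ} (hf : Continuous f) {s : Set ℝ³} (hs : IsClosed s)
    (hfs : ∀ x ∉ s, f x = 0) (hg : ∀ x ∈ s, ContinuousAt g x) :
    Continuous fun x => f x * g x := by
  rw [continuous_iff_continuousAt]
  intro x
  by_cases hx : x ∈ s
  · exact (hf.continuousAt).mul (hg x hx)
  · have hev : (fun y => f y * g y) =ᶠ[𝓝 x] fun _ => 0 := by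
      filter_upwards [hs.isOpen_compl.mem_nhds hx] with y hy
      simp [hfs y hy]
    exact continuousAt_const.congr hev.symm


private lemma aux_kbound (a b r : ℝ) (hr : 0 < r) (hb : r/2 ≤ b) (ha : |a| ≤ r^2 * b) :
    |a / (4 * π * b ^ 3)| ≤ 1/π := by
  have hπ : 0 < π := pi_pos
  have hb0 : 0 < b := lt_of_lt_of_le (by positivity) hb
  rw [abs_div, abs_of_pos (by positivity : (0:ℝ) < 4 * π * b ^ 3),
    div_le_div_iff₀ (by positivity) hπ]
  have h1 : r^2 ≤ 4 * b^2 := by nlinarith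
  have h2 : |a| ≤ 4 * b^3 := by nlinarith [abs_nonneg a]
  calc |a| * π ≤ 4*b^3 * π := mul_le_mul_of_nonneg_right h2 hπ.le
    _ = 1 * (4 * π * b ^ 3) := by ring

set_option maxHeartbeats 2000000 in
/-- Disagreement of the Coulomb-gauge and axial-gauge asymptotic fluxes in a direction `n ≠ e`
for a current of non-zero total charge. -/
theorem stmt_8 (j₀ : ℝ³ → ℝ) (hj : ContDiff ℝ (⊤ : ℕ∞) j₀) (hjc : HasCompactSupport j₀)
    (hq : (∫ x : ℝ³, j₀ x) ≠ 0)
    (n e : ℝ³) (hn : ‖n‖ = 1) (he : ‖e‖ = 1) (hne : n ≠ e) :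
    ∃ δ ∈ Ioo (0 : ℝ) (1 / 2), ∀ f : ℝ³ → ℝ, ContDiff ℝ (⊤ : ℕ∞) f → (∀ x, 0 ≤ f x) → f ≠ 0 →
      Function.support f ⊆ Metric.ball (0 : ℝ³) δ →
      (∃ L : ℝ, L ≠ 0 ∧ Tendsto (fun r : ℝ => ∫ x : ℝ³, f x * ∫ y : ℝ³,
          (r ^ 2 * ⟪n, r • n + r • x - y⟫_ℝ) / (4 * π * ‖r • n + r • x - y‖ ^ 3) * j₀ y)
        atTop (𝓝 L)) ∧
      (∀ᶠ r : ℝ in atTop,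
        (∫ x : ℝ³, f x * (r ^ 2 * ⟪n, e⟫_ℝ *
          ∫ s in Ioi (0 : ℝ), j₀ (r • (n + x) - s • e))) = 0) := by
  have hjcont : Continuous j₀ := hj.continuous
  -- radius of the support of j₀
  obtain ⟨R₀, hR₀⟩ := hjc.isBounded.subset_closedBall 0
  set R : ℝ := max R₀ 1 with hRdef
  have hR1 : (1 : ℝ) ≤ R := le_max_right _ _
  have hjR : ∀ y : ℝ³, R < ‖y‖ → j₀ y = 0 := by
    intro y hy
    apply image_eq_zero_of_notMem_tsupport
    intro hmem
    have := hR₀ hmem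
    rw [mem_closedBall, dist_zero_right] at this
    exact absurd this (not_le.mpr (lt_of_le_of_lt (le_max_left _ _) hy))
  -- the transverse gap constant
  set c : ℝ := Real.sqrt (1 - max ⟪n, e⟫_ℝ 0 ^ 2) with hcdef
  have hc : 0 < c := by
    have h1 : ⟪n, e⟫_ℝ < 1 := by
      rcases lt_or_eq_of_le ((real_inner_le_norm n e).trans_eq (by rw [hn, he, mul_one])) with h | h
      · exact h
      · exact absurd ((inner_eq_one_iff_of_norm_eq_one hn he).mp h) hne
    have h2 : max ⟪n, e⟫_ℝ 0 < 1 := max_lt h1 one_pos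
    have h3 : 0 ≤ max ⟪n, e⟫_ℝ 0 := le_max_right _ _
    exact Real.sqrt_pos.mpr (by nlinarith)
  have hray0 : ∀ s : ℝ, 0 ≤ s → c ≤ ‖n - s • e‖ := by
    intro s hs
    have hsq : ‖n - s • e‖ ^ 2 = 1 - 2 * (s * ⟪n, e⟫_ℝ) + s ^ 2 := by
      rw [norm_sub_sq_real, real_inner_smul_right, norm_smul, hn, he, Real.norm_eq_abs,
        abs_of_nonneg hs]
      ring
    have h2 : 1 - max ⟪n, e⟫_ℝ 0 ^ 2 ≤ ‖n - s • e‖ ^ 2 := by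
      rw [hsq]
      rcases max_cases ⟪n, e⟫_ℝ 0 with ⟨h, hge⟩ | ⟨h, hlt⟩ <;> rw [h] <;>
        nlinarith [sq_nonneg (s - ⟪n, e⟫_ℝ)]
    calc c ≤ Real.sqrt (‖n - s • e‖ ^ 2) := Real.sqrt_le_sqrt h2
      _ = ‖n - s • e‖ := Real.sqrt_sq (norm_nonneg _)
  have hc1 : c ≤ 1 := by
    have := hray0 0 le_rfl
    simpa [hn] using this
  -- the choice of δ
  set δ : ℝ := min (1/4) (c/4) with hδdef
  have hδ0 : 0 < δ := lt_min (by norm_num) (by positivity)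
  have hδ4 : δ ≤ 1/4 := min_le_left _ _
  have hδc : δ ≤ c/4 := min_le_right _ _
  refine ⟨δ, ⟨hδ0, lt_of_le_of_lt hδ4 (by norm_num)⟩, ?_⟩
  intro f hfsm hf0 hfne hsupp
  have hfcont : Continuous f := hfsm.continuous
  -- geometric bounds
  have hray : ∀ x : ℝ³, ‖x‖ ≤ δ → ∀ s : ℝ, 0 ≤ s → c/2 ≤ ‖(n + x) - s • e‖ := by
    intro x hx s hs
    have h1 : ‖n - s • e‖ ≤ ‖(n + x) - s • e‖ + ‖x‖ := by
      have := norm_sub_le ((n + x) - s • e) x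
      have he2 : (n + x) - s • e - x = n - s • e := by abel
      rw [he2] at this
      exact this
    have := hray0 s hs
    linarith
  have hnx : ∀ x : ℝ³, ‖x‖ ≤ δ → 3/4 ≤ ‖n + x‖ := by
    intro x hx
    have h1 : ‖n‖ ≤ ‖n + x‖ + ‖x‖ := by
      have := norm_sub_le (n + x) x
      have he2 : (n + x) - x = n := by abel
      rw [he2] at this
      exact this
    rw [hn] at h1
    linarith
  have hnx0 : ∀ x : ℝ³, ‖x‖ ≤ δ → n + x ≠ 0 := by
    intro x hx h
    have := hnx x hx
    rw [h, norm_zero] at this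
    linarith
  have hinn : ∀ x : ℝ³, ‖x‖ ≤ δ → 1/2 ≤ ⟪n, n + x⟫_ℝ := by
    intro x hx
    have h1 : ⟪n, n + x⟫_ℝ = 1 + ⟪n, x⟫_ℝ := by
      rw [inner_add_right, real_inner_self_eq_norm_sq, hn]
      norm_num
    have h2 : |⟪n, x⟫_ℝ| ≤ ‖x‖ := by
      have := abs_real_inner_le_norm n x
      rw [hn, one_mul] at this
      exact this
    have := abs_le.mp h2
    rw [h1]
    linarith
  have hxδ_of_supp : ∀ x : ℝ³, f x ≠ 0 → ‖x‖ < δ := by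
    intro x hx
    have := hsupp hx
    rwa [mem_ball_zero_iff] at this
  -- the limit kernel
  set W : ℝ³ → ℝ := fun x => ⟪n, n + x⟫_ℝ / (4 * π * ‖n + x‖ ^ 3) with hWdef
  set q : ℝ := ∫ y : ℝ³, j₀ y with hqdef
  have hjint : Integrable j₀ := hjcont.integrable_of_hasCompactSupport hjc
  -- kernel bound
  have hker : ∀ r : ℝ, max 1 (4 * R) ≤ r → ∀ x : ℝ³, ‖x‖ ≤ δ → ∀ y : ℝ³,
      ‖(r ^ 2 * ⟪n, r • n + r • x - y⟫_ℝ) / (4 * π * ‖r • n + r • x - y‖ ^ 3) * j₀ y‖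
        ≤ (1/π) * |j₀ y| := by
    intro r hr x hx y
    have hr1 : (1 : ℝ) ≤ r := le_trans (le_max_left _ _) hr
    have hr0 : (0 : ℝ) < r := lt_of_lt_of_le one_pos hr1
    have hrR : 4 * R ≤ r := le_trans (le_max_right _ _) hr
    by_cases hy : j₀ y = 0
    · simp [hy]
    · have hyR : ‖y‖ ≤ R := by
        by_contra h
        exact hy (hjR y (not_le.mp h))
      have hkey : r • n + r • x - y = r • (n + x) - y := by rw [smul_add]
      have hd : r / 2 ≤ ‖r • n + r • x - y‖ := by
        rw [hkey]
        have h1 : ‖r • (n + x)‖ ≤ ‖r • (n + x) - y‖ + ‖y‖ := by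
          calc ‖r • (n + x)‖ = ‖(r • (n + x) - y) + y‖ := by rw [sub_add_cancel]
            _ ≤ ‖r • (n + x) - y‖ + ‖y‖ := norm_add_le _ _
        have h2 : (3/4) * r ≤ ‖r • (n + x)‖ := by
          rw [norm_smul, Real.norm_eq_abs, abs_of_pos hr0]
          have := hnx x hx
          nlinarith
        linarith
      have hnum : |r ^ 2 * ⟪n, r • n + r • x - y⟫_ℝ| ≤ r ^ 2 * ‖r • n + r • x - y‖ := by
        rw [abs_mul, abs_of_pos (by positivity : (0:ℝ) < r ^ 2)]
        apply mul_le_mul_of_nonneg_left _ (by positivity)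
        have := abs_real_inner_le_norm n (r • n + r • x - y)
        rwa [hn, one_mul] at this
      rw [norm_mul, Real.norm_eq_abs, Real.norm_eq_abs]
      exact mul_le_mul_of_nonneg_right (aux_kbound _ _ r hr0 hd hnum) (abs_nonneg _)
  -- measurability of the inner integrand
  have hmeasy : ∀ (r : ℝ) (x : ℝ³), AEStronglyMeasurable (fun y : ℝ³ =>
      (r ^ 2 * ⟪n, r • n + r • x - y⟫_ℝ) / (4 * π * ‖r • n + r • x - y‖ ^ 3) * j₀ y) volume := by
    intro r x
    have hc0 : Continuous (fun y : ℝ³ => r • n + r • x - y) := by fun_prop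
    have hc1 : Continuous (fun y : ℝ³ => r ^ 2 * ⟪n, r • n + r • x - y⟫_ℝ) :=
      continuous_const.mul (Continuous.inner continuous_const hc0)
    have hc2 : Continuous (fun y : ℝ³ => 4 * π * ‖r • n + r • x - y‖ ^ 3) :=
      continuous_const.mul ((hc0.norm).pow 3)
    exact ((hc1.measurable.div hc2.measurable).mul hjcont.measurable).aestronglyMeasurable
  -- inner limit
  have hinner : ∀ x : ℝ³, ‖x‖ ≤ δ → Tendsto (fun r : ℝ => ∫ y : ℝ³,
      (r ^ 2 * ⟪n, r • n + r • x - y⟫_ℝ) / (4 * π * ‖r • n + r • x - y‖ ^ 3) * j₀ y)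
      atTop (𝓝 (W x * q)) := by
    intro x hx
    have hWq : W x * q = ∫ y : ℝ³, W x * j₀ y := (integral_const_mul _ _).symm
    rw [hWq]
    apply tendsto_integral_filter_of_dominated_convergence (fun y => (1/π) * |j₀ y|)
    · exact Eventually.of_forall (fun r => hmeasy r x)
    · filter_upwards [eventually_ge_atTop (max 1 (4 * R))] with r hr
      exact Eventually.of_forall (fun y => hker r hr x hx y)
    · exact (hjint.abs).const_mul _
    · apply Eventually.of_forall
      intro y
      apply Tendsto.mul_const
      -- pointwise kernel limit
      have hv : n + x ≠ 0 := hnx0 x hx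
      have hφ : ContinuousAt (fun t : ℝ =>
          (⟪n, n + x⟫_ℝ - t * ⟪n, y⟫_ℝ) / (4 * π * ‖(n + x) - t • y‖ ^ 3)) 0 := by
        apply ContinuousAt.div
        · fun_prop
        · have : Continuous (fun t : ℝ => 4 * π * ‖(n + x) - t • y‖ ^ 3) := by fun_prop
          exact this.continuousAt
        · simp only [zero_smul, sub_zero]
          have : 0 < ‖n + x‖ := norm_pos_iff.mpr hv
          positivity
      have h1 := hφ.tendsto.comp tendsto_inv_atTop_zero
      simp only [Function.comp_def, zero_smul, sub_zero, zero_mul, mul_zero] at h1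
      show Tendsto _ atTop (𝓝 (⟪n, n + x⟫_ℝ / (4 * π * ‖n + x‖ ^ 3)))
      apply h1.congr'
      filter_upwards [eventually_gt_atTop (0 : ℝ)] with r hr0
      -- the scaling identity
      have key : r • n + r • x - y = r • ((n + x) - r⁻¹ • y) := by
        rw [smul_sub, smul_smul, mul_inv_cancel₀ hr0.ne', one_smul, smul_add]
      rw [key, real_inner_smul_right, norm_smul, Real.norm_eq_abs, abs_of_pos hr0,
        inner_sub_right, real_inner_smul_right]
      set A := ⟪n, n + x⟫_ℝ - r⁻¹ * ⟪n, y⟫_ℝ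
      set dd := ‖(n + x) - r⁻¹ • y‖
      rw [show r ^ 2 * (r * A) = r ^ 3 * A by ring,
        show 4 * π * (r * dd) ^ 3 = r ^ 3 * (4 * π * dd ^ 3) by ring,
        mul_div_mul_left _ _ (pow_ne_zero 3 hr0.ne')]
  -- properties of W on the support
  have hWcont : ∀ x ∈ Metric.closedBall (0:ℝ³) δ, ContinuousAt W x := by
    intro x hx
    rw [mem_closedBall, dist_zero_right] at hx
    apply ContinuousAt.div
    · have : Continuous (fun x : ℝ³ => ⟪n, n + x⟫_ℝ) :=
        Continuous.inner continuous_const (by fun_prop)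
      exact this.continuousAt
    · have : Continuous (fun x : ℝ³ => 4 * π * ‖n + x‖ ^ 3) := by fun_prop
      exact this.continuousAt
    · have := hnx x hx
      positivity
  have hWpos : ∀ x : ℝ³, ‖x‖ ≤ δ → 0 < W x := by
    intro x hx
    have h1 := hinn x hx
    have h2 := hnx x hx
    apply div_pos (by linarith)
    positivity
  -- positivity of the limit
  have hIpos : 0 < ∫ x : ℝ³, f x * W x := by
    have hzero : ∀ x ∉ Metric.closedBall (0:ℝ³) δ, f x = 0 := by
      intro x hx
      by_contra h
      exact hx (ball_subset_closedBall (hsupp h))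
    have hcont : Continuous fun x => f x * W x :=
      aux_mul_cont hfcont isClosed_closedBall hzero hWcont
    have hcs : HasCompactSupport fun x => f x * W x := by
      apply HasCompactSupport.intro (isCompact_closedBall (0:ℝ³) δ)
      intro x hx
      rw [hzero x hx, zero_mul]
    have hint : Integrable (fun x => f x * W x) := hcont.integrable_of_hasCompactSupport hcs
    have hnn : ∀ x, 0 ≤ f x * W x := by
      intro x
      by_cases h : f x = 0
      · simp [h]
      · exact mul_nonneg (hf0 x) (hWpos x (hxδ_of_supp x h).le).le
    rw [integral_pos_iff_support_of_nonneg hnn hint]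
    have hsub : Function.support f ⊆ Function.support fun x => f x * W x := by
      intro x hx
      have hx' : f x ≠ 0 := hx
      have := (hWpos x (hxδ_of_supp x hx').le).ne'
      simp only [Function.mem_support]
      exact mul_ne_zero hx' this
    have hopen : IsOpen (Function.support f) := by
      rw [Function.support]
      exact isOpen_compl_singleton.preimage hfcont
    refine lt_of_lt_of_le (hopen.measure_pos volume ?_) (measure_mono hsub)
    exact Function.support_nonempty_iff.mpr hfne
  have hfcs : HasCompactSupport f := by
    apply HasCompactSupport.intro (isCompact_closedBall (0:ℝ³) δ)
    intro x hx
    by_contra h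
    exact hx (ball_subset_closedBall (hsupp h))
  refine ⟨?_, ?_⟩
  · -- Coulomb part
    refine ⟨(∫ x : ℝ³, f x * W x) * q, mul_ne_zero hIpos.ne' hq, ?_⟩
    have hgoal : (∫ x : ℝ³, f x * W x) * q = ∫ x : ℝ³, f x * (W x * q) := by
      rw [← integral_mul_const]
      simp only [mul_assoc]
    rw [hgoal]
    apply tendsto_integral_filter_of_dominated_convergence
      (fun x => |f x| * ((1/π) * ∫ y : ℝ³, |j₀ y|))
    · apply Eventually.of_forall
      intro r
      have hc0 : Continuous (fun p : ℝ³ × ℝ³ => r • n + r • p.1 - p.2) := by fun_prop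
      have hc1 : Continuous (fun p : ℝ³ × ℝ³ => r ^ 2 * ⟪n, r • n + r • p.1 - p.2⟫_ℝ) :=
        continuous_const.mul (Continuous.inner continuous_const hc0)
      have hc2 : Continuous (fun p : ℝ³ × ℝ³ => 4 * π * ‖r • n + r • p.1 - p.2‖ ^ 3) :=
        continuous_const.mul ((hc0.norm).pow 3)
      have hm : StronglyMeasurable (fun p : ℝ³ × ℝ³ =>
          (r ^ 2 * ⟪n, r • n + r • p.1 - p.2⟫_ℝ) / (4 * π * ‖r • n + r • p.1 - p.2‖ ^ 3)
            * j₀ p.2) :=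
        ((hc1.measurable.div hc2.measurable).mul
          (hjcont.measurable.comp measurable_snd)).stronglyMeasurable
      exact hfcont.aestronglyMeasurable.mul hm.integral_prod_right'.aestronglyMeasurable
    · filter_upwards [eventually_ge_atTop (max 1 (4 * R))] with r hr
      apply Eventually.of_forall
      intro x
      by_cases hfx : f x = 0
      · simp only [hfx, zero_mul, norm_zero, abs_zero]
        positivity
      · have hx : ‖x‖ ≤ δ := (hxδ_of_supp x hfx).le
        rw [norm_mul, Real.norm_eq_abs]
        apply mul_le_mul_of_nonneg_left _ (abs_nonneg _)
        calc ‖∫ y : ℝ³, (r ^ 2 * ⟪n, r • n + r • x - y⟫_ℝ) /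
                (4 * π * ‖r • n + r • x - y‖ ^ 3) * j₀ y‖
            ≤ ∫ y : ℝ³, (1/π) * |j₀ y| :=
              norm_integral_le_of_norm_le ((hjint.abs).const_mul _)
                (Eventually.of_forall (fun y => hker r hr x hx y))
          _ = (1/π) * ∫ y : ℝ³, |j₀ y| := integral_const_mul _ _
    · exact (hfcont.abs.integrable_of_hasCompactSupport hfcs.abs).mul_const _
    · apply Eventually.of_forall
      intro x
      by_cases hfx : f x = 0
      · simpa [hfx] using (tendsto_const_nhds : Tendsto (fun _ : ℝ => (0:ℝ)) atTop (𝓝 0))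
      · exact (hinner x (hxδ_of_supp x hfx).le).const_mul (f x)
  · -- axial part vanishes
    filter_upwards [eventually_ge_atTop (max 1 (4 * R / c))] with r hr
    have hr1 : (1 : ℝ) ≤ r := le_trans (le_max_left _ _) hr
    have hr0 : (0 : ℝ) < r := lt_of_lt_of_le one_pos hr1
    have hrR : 4 * R / c ≤ r := le_trans (le_max_right _ _) hr
    have hRrc : R < r * (c / 2) := by
      have h1 : 4 * R ≤ r * c := by
        rw [div_le_iff₀ hc] at hrR
        linarith
      nlinarith
    have hzero : ∀ x : ℝ³, f x * (r ^ 2 * ⟪n, e⟫_ℝ *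
        ∫ s in Ioi (0 : ℝ), j₀ (r • (n + x) - s • e)) = 0 := by
      intro x
      by_cases hfx : f x = 0
      · rw [hfx, zero_mul]
      · have hx : ‖x‖ ≤ δ := (hxδ_of_supp x hfx).le
        have hj0 : ∀ s ∈ Ioi (0 : ℝ), j₀ (r • (n + x) - s • e) = 0 := by
          intro s hs
          have hs0 : (0 : ℝ) < s := hs
          apply hjR
          have key : r • (n + x) - s • e = r • ((n + x) - (s / r) • e) := by
            rw [smul_sub, smul_smul, mul_div_cancel₀ _ hr0.ne']
          rw [key, norm_smul, Real.norm_eq_abs, abs_of_pos hr0]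
          calc R < r * (c / 2) := hRrc
            _ ≤ r * ‖(n + x) - (s / r) • e‖ :=
                mul_le_mul_of_nonneg_left (hray x hx (s / r) (by positivity)) hr0.le
        have : (∫ s in Ioi (0 : ℝ), j₀ (r • (n + x) - s • e)) = 0 := by
          rw [setIntegral_congr_fun measurableSet_Ioi hj0]
          exact integral_zero _ _
        rw [this, mul_zero, mul_zero]
    have heq : (fun x : ℝ³ => f x * (r ^ 2 * ⟪n, e⟫_ℝ *
        ∫ s in Ioi (0 : ℝ), j₀ (r • (n + x) - s • e))) = fun _ => (0:ℝ) := funext hzero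
    rw [heq]
    exact integral_zero _ _
end
end

section
/- Let j₀ : ℝ³ → ℝ be smooth and compactly supported with q := ∫ j₀ ≠ 0, and let e, e′ ∈ ℝ³ be unit vectors with e ≠ e′. Then there exists δ ∈ (0,1) such that for every smooth nonnegative f : ℝ³ → ℝ with support in B(0,δ) and f(0) > 0: lim_{r→∞} ∫ f(x) · r² [∫₀^∞ j₀(r(e+x) − se) ds] dx = q ∫_ℝ f(σe) dσ ≠ 0, while for all sufficiently large r, ∫ f(x) · r²(e·e′) [∫₀^∞ j₀(r(e+x) − se′) ds] dx = 0. In particular the asymptotic flux in direction n = e distinguishes the axial gauges with axes e and e′. -/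
open MeasureTheory Filter Topology Real Set Metric
open scoped InnerProductSpace

noncomputable section

local notation "ℝ³" => EuclideanSpace ℝ (Fin 3)

set_option maxHeartbeats 1000000 in
/-- The asymptotic flux in direction `n = e` distinguishes the axial gauges
with distinct axes `e` and `e′`, for a current of non-zero total charge. -/
theorem stmt_9 (j₀ : ℝ³ → ℝ) (hj : ContDiff ℝ (⊤ : ℕ∞) j₀) (hjc : HasCompactSupport j₀)
    (hq : (∫ x : ℝ³, j₀ x) ≠ 0)
    (e e' : ℝ³) (he : ‖e‖ = 1) (he' : ‖e'‖ = 1) (hee' : e ≠ e') :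
    ∃ δ ∈ Ioo (0 : ℝ) 1, ∀ f : ℝ³ → ℝ, ContDiff ℝ (⊤ : ℕ∞) f → (∀ x, 0 ≤ f x) →
      Function.support f ⊆ Metric.ball (0 : ℝ³) δ → 0 < f 0 →
      Tendsto (fun r : ℝ => ∫ x : ℝ³,
          f x * (r ^ 2 * ∫ s in Ioi (0 : ℝ), j₀ (r • (e + x) - s • e)))
        atTop (𝓝 ((∫ x : ℝ³, j₀ x) * ∫ σ : ℝ, f (σ • e))) ∧
      ((∫ x : ℝ³, j₀ x) * ∫ σ : ℝ, f (σ • e)) ≠ 0 ∧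
      (∀ᶠ r : ℝ in atTop,
        (∫ x : ℝ³, f x * (r ^ 2 * ⟪e, e'⟫_ℝ *
          ∫ s in Ioi (0 : ℝ), j₀ (r • (e + x) - s • e'))) = 0) := by
  classical
  -- support radius of j₀
  obtain ⟨R₀, hR₀⟩ := hjc.isBounded.subset_closedBall 0
  set R₁ : ℝ := max R₀ 1 with hR₁def
  have hR₁pos : (0 : ℝ) < R₁ := lt_max_of_lt_right one_pos
  have hRsupp : tsupport j₀ ⊆ Metric.closedBall 0 R₁ :=
    hR₀.trans (closedBall_subset_closedBall (le_max_left _ _))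
  have hj0 : ∀ y : ℝ³, R₁ < ‖y‖ → j₀ y = 0 := by
    intro y hy
    apply image_eq_zero_of_notMem_tsupport
    intro hmem
    have := hRsupp hmem
    rw [mem_closedBall, dist_zero_right] at this
    linarith
  -- geometry of the two directions
  set c : ℝ := ⟪e, e'⟫_ℝ with hcdef
  have hc1 : c < 1 := (inner_lt_one_iff_real_of_norm_eq_one he he').2 hee'
  set m : ℝ := max c 0 with hmdef
  have hm0 : 0 ≤ m := le_max_right _ _
  have hm1 : m < 1 := max_lt hc1 one_pos
  set κ : ℝ := Real.sqrt (1 - m) with hκdef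
  have hκ0 : 0 < κ := Real.sqrt_pos.2 (by linarith)
  have hκsq : κ ^ 2 = 1 - m := Real.sq_sqrt (by linarith)
  have key : ∀ r s : ℝ, 0 ≤ r → 0 ≤ s → κ * r ≤ ‖r • e - s • e'‖ := by
    intro r s hr hs
    have hsq : ‖r • e - s • e'‖ ^ 2 = r ^ 2 - 2 * (r * (s * c)) + s ^ 2 := by
      rw [norm_sub_sq_real, real_inner_smul_left, real_inner_smul_right,
        norm_smul, norm_smul, he, he', Real.norm_eq_abs, Real.norm_eq_abs,
        mul_one, mul_one, sq_abs, sq_abs, ← hcdef]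
    have hcm : c ≤ m := le_max_left _ _
    have h1 : (κ * r) ^ 2 ≤ ‖r • e - s • e'‖ ^ 2 := by
      rw [hsq, mul_pow, hκsq]
      nlinarith [mul_nonneg (mul_nonneg hr hs) (sub_nonneg.2 hcm),
        mul_nonneg hm0 (sq_nonneg (r - s)),
        mul_nonneg (sub_nonneg.2 hm1.le) (sq_nonneg s)]
    calc κ * r = Real.sqrt ((κ * r) ^ 2) := (Real.sqrt_sq (by positivity)).symm
      _ ≤ Real.sqrt (‖r • e - s • e'‖ ^ 2) := Real.sqrt_le_sqrt h1
      _ = ‖r • e - s • e'‖ := Real.sqrt_sq (norm_nonneg _)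
  -- the choice of δ
  set δ : ℝ := min (κ / 2) (1 / 2) with hδdef
  have hδ0 : 0 < δ := lt_min (by positivity) one_half_pos
  have hδ1 : δ < 1 := lt_of_le_of_lt (min_le_right _ _) (by norm_num)
  have hδκ : δ ≤ κ / 2 := min_le_left _ _
  have hδhalf : δ ≤ 1 / 2 := min_le_right _ _
  refine ⟨δ, ⟨hδ0, hδ1⟩, fun f hfC hf0 hfsupp hf0pos => ?_⟩
  have hfc : Continuous f := hfC.continuous
  have hjcont : Continuous j₀ := hj.continuous
  have hjInt : Integrable j₀ := hjcont.integrable_of_hasCompactSupport hjc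
  have hfsupp' : ∀ x : ℝ³, f x ≠ 0 → ‖x‖ < δ := by
    intro x hx
    have := hfsupp (Function.mem_support.2 hx)
    rwa [mem_ball, dist_zero_right] at this
  have hfz : ∀ x : ℝ³, δ ≤ ‖x‖ → f x = 0 := by
    intro x hx
    by_contra h
    exact absurd hx (not_le.2 (hfsupp' x h))
  have hfHCS : HasCompactSupport f :=
    HasCompactSupport.intro (isCompact_closedBall (0 : ℝ³) δ) fun x hx =>
      hfz x (le_of_lt (by simpa [mem_closedBall, dist_zero_right, not_le] using hx))
  obtain ⟨C, hC⟩ := hfHCS.exists_bound_of_continuous hfc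
  have hC0 : 0 ≤ C := le_trans (norm_nonneg _) (hC 0)
  -- integrability and positivity of σ ↦ f (σ • e)
  have hσcont : Continuous fun σ : ℝ => f (σ • e) :=
    hfc.comp (continuous_id.smul continuous_const)
  have hσsupp : HasCompactSupport fun σ : ℝ => f (σ • e) := by
    apply HasCompactSupport.intro (isCompact_closedBall (0 : ℝ) δ)
    intro σ hσ
    apply hfz
    rw [norm_smul, he, mul_one]
    have : ¬ |σ| ≤ δ := by simpa [mem_closedBall, Real.dist_eq] using hσ
    exact le_of_lt (not_le.1 this)
  have hσInt : Integrable fun σ : ℝ => f (σ • e) :=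
    hσcont.integrable_of_hasCompactSupport hσsupp
  have hpos : 0 < ∫ σ : ℝ, f (σ • e) := by
    rw [integral_pos_iff_support_of_nonneg (fun σ => hf0 _) hσInt]
    have hopen : IsOpen {σ : ℝ | 0 < f (σ • e)} := isOpen_lt continuous_const hσcont
    have hsub : {σ : ℝ | 0 < f (σ • e)} ⊆ Function.support fun σ : ℝ => f (σ • e) :=
      fun σ h => ne_of_gt h
    refine lt_of_lt_of_le ?_ (measure_mono hsub)
    exact hopen.measure_pos volume ⟨0, by simpa using hf0pos⟩
  have hne : ((∫ x : ℝ³, j₀ x) * ∫ σ : ℝ, f (σ • e)) ≠ 0 := mul_ne_zero hq (ne_of_gt hpos)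
  -- Part 3 : the flux along e' vanishes for large r
  have part3 : ∀ᶠ r : ℝ in atTop,
      (∫ x : ℝ³, f x * (r ^ 2 * ⟪e, e'⟫_ℝ *
        ∫ s in Ioi (0 : ℝ), j₀ (r • (e + x) - s • e'))) = 0 := by
    filter_upwards [eventually_ge_atTop (max 1 (2 * (R₁ + 1) / κ))] with r hr
    have hr1 : (1 : ℝ) ≤ r := le_trans (le_max_left _ _) hr
    have hr0 : (0 : ℝ) < r := lt_of_lt_of_le one_pos hr1
    have hrκ : 2 * (R₁ + 1) / κ ≤ r := le_trans (le_max_right _ _) hr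
    have hκr : 2 * (R₁ + 1) ≤ κ * r := by
      rw [div_le_iff₀ hκ0] at hrκ; linarith
    have hzero : ∀ x : ℝ³, f x ≠ 0 → ∀ s ∈ Ioi (0 : ℝ), j₀ (r • (e + x) - s • e') = 0 := by
      intro x hx s hs
      have hxδ : ‖x‖ < δ := hfsupp' x hx
      apply hj0
      have hrw : r • (e + x) - s • e' = (r • e - s • e') + r • x := by module
      rw [hrw]
      have h1 : ‖r • e - s • e'‖ - ‖r • x‖ ≤ ‖(r • e - s • e') + r • x‖ := by
        simpa [sub_neg_eq_add] using norm_sub_norm_le (r • e - s • e') (-(r • x))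
      have h2 : κ * r ≤ ‖r • e - s • e'‖ := key r s hr0.le (le_of_lt hs)
      have h3 : ‖r • x‖ ≤ κ / 2 * r := by
        rw [norm_smul, Real.norm_eq_abs, abs_of_nonneg hr0.le]
        calc r * ‖x‖ ≤ r * δ := mul_le_mul_of_nonneg_left hxδ.le hr0.le
          _ ≤ r * (κ / 2) := mul_le_mul_of_nonneg_left hδκ hr0.le
          _ = κ / 2 * r := mul_comm _ _
      linarith
    have hfun : ∀ x : ℝ³,
        f x * (r ^ 2 * ⟪e, e'⟫_ℝ * ∫ s in Ioi (0 : ℝ), j₀ (r • (e + x) - s • e')) = 0 := by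
      intro x
      by_cases hx : f x = 0
      · simp [hx]
      · rw [setIntegral_eq_zero_of_forall_eq_zero (hzero x hx)]; ring
    rw [integral_eq_zero_of_ae (Eventually.of_forall hfun)]
  -- Part 1 : the limit along e
  -- the product-integral representation, valid for large r
  have heq : ∀ᶠ r : ℝ in atTop,
      (∫ x : ℝ³, f x * (r ^ 2 * ∫ s in Ioi (0 : ℝ), j₀ (r • (e + x) - s • e)))
        = ∫ p : ℝ × ℝ³, f (r⁻¹ • p.2 + p.1 • e) * j₀ p.2
            ∂((volume : Measure ℝ).prod (volume : Measure ℝ³)) := by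
    filter_upwards [eventually_ge_atTop (max 1 (2 * R₁ + 2))] with r hr
    have hr1 : (1 : ℝ) ≤ r := le_trans (le_max_left _ _) hr
    have hr0 : (0 : ℝ) < r := lt_of_lt_of_le one_pos hr1
    have hrR : 2 * R₁ + 2 ≤ r := le_trans (le_max_right _ _) hr
    -- inner integral rewrite
    have hinner : ∀ x : ℝ³, ‖x‖ < δ →
        (∫ s in Ioi (0 : ℝ), j₀ (r • (e + x) - s • e))
          = r * ∫ u : ℝ, j₀ (r • (x - u • e)) := by
      intro x hx
      have hvan : ∀ s ∉ Ioi (0 : ℝ), j₀ (r • (e + x) - s • e) = 0 := by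
        intro s hs
        have hs0 : s ≤ 0 := by simpa using hs
        apply hj0
        have hrw : r • (e + x) - s • e = (r - s) • e + r • x := by module
        rw [hrw]
        have h1 : ‖(r - s) • e‖ - ‖r • x‖ ≤ ‖(r - s) • e + r • x‖ := by
          simpa [sub_neg_eq_add] using norm_sub_norm_le ((r - s) • e) (-(r • x))
        have h2 : ‖(r - s) • e‖ = r - s := by
          rw [norm_smul, he, mul_one, Real.norm_eq_abs, abs_of_nonneg (by linarith)]
        have h3 : ‖r • x‖ ≤ r * δ := by
          rw [norm_smul, Real.norm_eq_abs, abs_of_nonneg hr0.le]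
          exact mul_le_mul_of_nonneg_left hx.le hr0.le
        have h4 : r * δ ≤ r * (1 / 2) := mul_le_mul_of_nonneg_left hδhalf hr0.le
        linarith
      rw [setIntegral_eq_integral_of_forall_compl_eq_zero hvan]
      have e1 : (∫ s : ℝ, j₀ (r • (e + x) - s • e))
          = ∫ t : ℝ, j₀ (r • (e + x) - (t + r) • e) :=
        (integral_add_right_eq_self (fun s : ℝ => j₀ (r • (e + x) - s • e)) r).symm
      have e2 : (∫ u : ℝ, j₀ (r • (x - u • e)))
          = |r⁻¹| • ∫ t : ℝ, j₀ (r • (e + x) - (t + r) • e) := by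
        rw [show (fun u : ℝ => j₀ (r • (x - u • e)))
            = fun u : ℝ => j₀ (r • (e + x) - (r * u + r) • e) from
          funext fun u => by congr 1; module]
        exact Measure.integral_comp_mul_left (fun t : ℝ => j₀ (r • (e + x) - (t + r) • e)) r
      rw [e1, e2, smul_eq_mul, abs_inv, abs_of_pos hr0, ← mul_assoc,
        mul_inv_cancel₀ hr0.ne', one_mul]
    -- rewrite integrand
    have hstep1 : (∫ x : ℝ³, f x * (r ^ 2 * ∫ s in Ioi (0 : ℝ), j₀ (r • (e + x) - s • e)))
        = ∫ x : ℝ³, ∫ u : ℝ, f x * r ^ 3 * j₀ (r • (x - u • e)) := by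
      congr 1
      funext x
      by_cases hx : f x = 0
      · simp [hx]
      · rw [hinner x (hfsupp' x hx), integral_const_mul]
        ring
    -- integrability on the product for the swap
    have hΦ₁int : Integrable (Function.uncurry fun (x : ℝ³) (u : ℝ) =>
        f x * r ^ 3 * j₀ (r • (x - u • e))) ((volume : Measure ℝ³).prod volume) := by
      apply Continuous.integrable_of_hasCompactSupport
      · exact ((hfc.comp continuous_fst).mul continuous_const).mul
          (hjcont.comp ((continuous_fst.sub (continuous_snd.smul continuous_const)).const_smul r))
      · apply HasCompactSupport.intro
          ((isCompact_closedBall (0 : ℝ³) δ).prod (isCompact_closedBall (0 : ℝ) (δ + R₁)))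
        rintro ⟨x, u⟩ hp
        by_cases hx : f x = 0
        · simp [Function.uncurry, hx]
        · have hxδ : ‖x‖ < δ := hfsupp' x hx
          have hu : ¬ |u| ≤ δ + R₁ := by
            intro hle
            exact hp ⟨by simpa [mem_closedBall, dist_zero_right] using hxδ.le,
              by simpa [mem_closedBall, Real.dist_eq] using hle⟩
          push_neg at hu
          have hj' : j₀ (r • (x - u • e)) = 0 := by
            apply hj0
            rw [norm_smul, Real.norm_eq_abs, abs_of_nonneg hr0.le]
            have h1 : ‖u • e‖ - ‖x‖ ≤ ‖x - u • e‖ := by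
              simpa [norm_sub_rev] using norm_sub_norm_le (u • e) x
            rw [norm_smul, he, mul_one, Real.norm_eq_abs] at h1
            have h2 : R₁ < ‖x - u • e‖ := by linarith
            calc R₁ < 1 * ‖x - u • e‖ := by linarith
              _ ≤ r * ‖x - u • e‖ := mul_le_mul_of_nonneg_right hr1 (norm_nonneg _)
          simp [Function.uncurry, hj']
    have hswap : (∫ x : ℝ³, ∫ u : ℝ, f x * r ^ 3 * j₀ (r • (x - u • e)))
        = ∫ u : ℝ, ∫ x : ℝ³, f x * r ^ 3 * j₀ (r • (x - u • e)) :=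
      integral_integral_swap hΦ₁int
    -- change of variables in x, for each u
    have hx_cv : ∀ u : ℝ, (∫ x : ℝ³, f x * r ^ 3 * j₀ (r • (x - u • e)))
        = ∫ w : ℝ³, f (r⁻¹ • w + u • e) * j₀ w := by
      intro u
      have t1 : (∫ x : ℝ³, f x * r ^ 3 * j₀ (r • (x - u • e)))
          = r ^ 3 * ∫ x : ℝ³, f x * j₀ (r • (x - u • e)) := by
        rw [← integral_const_mul]
        congr 1
        funext x
        ring
      have t2 : (∫ x : ℝ³, f x * j₀ (r • (x - u • e)))
          = ∫ z : ℝ³, f (z + u • e) * j₀ (r • z) := by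
        rw [← integral_add_right_eq_self (fun x : ℝ³ => f x * j₀ (r • (x - u • e))) (u • e)]
        simp only [add_sub_cancel_right]
      have t3 : (∫ z : ℝ³, f (z + u • e) * j₀ (r • z))
          = (r ^ 3)⁻¹ * ∫ w : ℝ³, f (r⁻¹ • w + u • e) * j₀ w := by
        have h := Measure.integral_comp_smul_of_nonneg (volume : Measure ℝ³)
          (fun w : ℝ³ => f (r⁻¹ • w + u • e) * j₀ w) r (hR := hr0.le)
        rw [finrank_euclideanSpace_fin] at h
        simp only [inv_smul_smul₀ hr0.ne'] at h
        rw [smul_eq_mul] at h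
        exact h
      rw [t1, t2, t3, ← mul_assoc, mul_inv_cancel₀ (by positivity), one_mul]
    -- reassemble into a product integral
    have hΨint : Integrable (Function.uncurry fun (u : ℝ) (w : ℝ³) =>
        f (r⁻¹ • w + u • e) * j₀ w) ((volume : Measure ℝ).prod volume) := by
      apply Continuous.integrable_of_hasCompactSupport
      · exact (hfc.comp (((continuous_snd.const_smul r⁻¹)).add
          (continuous_fst.smul continuous_const))).mul (hjcont.comp continuous_snd)
      · apply HasCompactSupport.intro
          ((isCompact_closedBall (0 : ℝ) (δ + R₁)).prod (isCompact_closedBall (0 : ℝ³) R₁))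
        rintro ⟨u, w⟩ hp
        by_cases hw : j₀ w = 0
        · simp [Function.uncurry, hw]
        · have hwR : ‖w‖ ≤ R₁ := by
            by_contra hcon
            exact hw (hj0 w (not_le.1 hcon))
          by_cases hfw : f (r⁻¹ • w + u • e) = 0
          · simp [Function.uncurry, hfw]
          · exfalso
            apply hp
            have hfδ : ‖r⁻¹ • w + u • e‖ < δ := hfsupp' _ hfw
            have h1 : ‖u • e‖ - ‖r⁻¹ • w‖ ≤ ‖r⁻¹ • w + u • e‖ := by
              simpa [sub_neg_eq_add, add_comm] using norm_sub_norm_le (u • e) (-(r⁻¹ • w))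
            have h2 : ‖r⁻¹ • w‖ ≤ R₁ := by
              rw [norm_smul, Real.norm_eq_abs, abs_of_nonneg (inv_nonneg.2 hr0.le)]
              calc r⁻¹ * ‖w‖ ≤ 1 * R₁ := by
                    apply mul_le_mul (inv_le_one_of_one_le₀ hr1) hwR (norm_nonneg _) zero_le_one
                _ = R₁ := one_mul _
            rw [norm_smul, he, mul_one, Real.norm_eq_abs] at h1
            exact ⟨by simp only [mem_closedBall, Real.dist_eq, sub_zero]; linarith,
              by simpa [mem_closedBall, dist_zero_right] using hwR⟩
    rw [hstep1, hswap]
    rw [show (fun u : ℝ => ∫ x : ℝ³, f x * r ^ 3 * j₀ (r • (x - u • e)))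
        = fun u : ℝ => ∫ w : ℝ³, f (r⁻¹ • w + u • e) * j₀ w from funext hx_cv]
    exact integral_integral hΨint
  -- dominated convergence
  have hDCT : Tendsto (fun r : ℝ => ∫ p : ℝ × ℝ³, f (r⁻¹ • p.2 + p.1 • e) * j₀ p.2
        ∂((volume : Measure ℝ).prod (volume : Measure ℝ³)))
      atTop (𝓝 (∫ p : ℝ × ℝ³, f (p.1 • e) * j₀ p.2
        ∂((volume : Measure ℝ).prod (volume : Measure ℝ³)))) := by
    apply tendsto_integral_filter_of_dominated_convergence
      (bound := fun p : ℝ × ℝ³ =>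
        (Metric.closedBall (0 : ℝ) (δ + R₁)).indicator (fun _ => C) p.1 * |j₀ p.2|)
    · refine Eventually.of_forall fun r => Continuous.aestronglyMeasurable ?_
      exact (hfc.comp ((continuous_snd.const_smul r⁻¹).add
        (continuous_fst.smul continuous_const))).mul (hjcont.comp continuous_snd)
    · filter_upwards [eventually_ge_atTop (1 : ℝ)] with r hr1
      refine Eventually.of_forall fun p => ?_
      have hr0 : (0 : ℝ) < r := lt_of_lt_of_le one_pos hr1
      have hind0 : 0 ≤ (Metric.closedBall (0 : ℝ) (δ + R₁)).indicator (fun _ => C) p.1 :=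
        Set.indicator_nonneg (fun _ _ => hC0) _
      by_cases hw : j₀ p.2 = 0
      · simp [hw, norm_mul]
      by_cases hfp : f (r⁻¹ • p.2 + p.1 • e) = 0
      · rw [hfp, zero_mul, norm_zero]
        exact mul_nonneg hind0 (abs_nonneg _)
      · have hwR : ‖p.2‖ ≤ R₁ := by
          by_contra hcon
          exact hw (hj0 _ (not_le.1 hcon))
        have hfδ : ‖r⁻¹ • p.2 + p.1 • e‖ < δ := hfsupp' _ hfp
        have h1 : ‖p.1 • e‖ - ‖r⁻¹ • p.2‖ ≤ ‖r⁻¹ • p.2 + p.1 • e‖ := by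
          simpa [sub_neg_eq_add, add_comm] using norm_sub_norm_le (p.1 • e) (-(r⁻¹ • p.2))
        have h2 : ‖r⁻¹ • p.2‖ ≤ R₁ := by
          rw [norm_smul, Real.norm_eq_abs, abs_of_nonneg (inv_nonneg.2 hr0.le)]
          calc r⁻¹ * ‖p.2‖ ≤ 1 * R₁ := by
                apply mul_le_mul (inv_le_one_of_one_le₀ hr1) hwR (norm_nonneg _) zero_le_one
            _ = R₁ := one_mul _
        rw [norm_smul, he, mul_one, Real.norm_eq_abs] at h1
        have hmem : p.1 ∈ Metric.closedBall (0 : ℝ) (δ + R₁) := by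
          simp only [mem_closedBall, Real.dist_eq, sub_zero]; linarith
        rw [Set.indicator_of_mem hmem]
        rw [norm_mul, Real.norm_eq_abs, Real.norm_eq_abs]
        exact mul_le_mul_of_nonneg_right (by simpa [Real.norm_eq_abs] using hC _) (abs_nonneg _)
    · refine Integrable.mul_prod ?_ hjInt.abs
      exact ((integrableOn_const measure_closedBall_lt_top.ne).integrable_indicator
        measurableSet_closedBall)
    · refine Eventually.of_forall fun p => ?_
      have h1 : Tendsto (fun r : ℝ => r⁻¹ • p.2 + p.1 • e) atTop (𝓝 (p.1 • e)) := by
        have h0 : Tendsto (fun r : ℝ => r⁻¹ • p.2) atTop (𝓝 (0 : ℝ³)) := by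
          simpa using (tendsto_inv_atTop_zero (𝕜 := ℝ)).smul_const p.2
        simpa using h0.add_const (p.1 • e)
      exact (((hfc.tendsto _).comp h1).mul_const (j₀ p.2))
  have hval : (∫ p : ℝ × ℝ³, f (p.1 • e) * j₀ p.2
      ∂((volume : Measure ℝ).prod (volume : Measure ℝ³)))
      = (∫ x : ℝ³, j₀ x) * ∫ σ : ℝ, f (σ • e) := by
    rw [integral_prod_mul (fun σ : ℝ => f (σ • e)) j₀, mul_comm]
  rw [hval] at hDCT
  exact ⟨hDCT.congr' (EventuallyEq.symm heq), hne, part3⟩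
end
end

section
/- Let f : ℝ³ → ℝ be a Schwartz function with Fourier transform f̂(k) = ∫ e^{−ik·x} f(x) dx, let n ∈ ℝ³ be a unit vector, and for r > 0 set f_{n,r}(x) := (1/r) f((x − rn)/r). Then for every r > 0, ∫_{ℝ³} |k| · |n − ((k/|k|)·n)(k/|k|)|² · |f̂_{n,r}(k)|² dk = ∫_{ℝ³} |k| · |n − ((k/|k|)·n)(k/|k|)|² · |f̂(k)|² dk; i.e. this integral is independent of r. -/
/-! The Fourier transform of `f_{n,r}` at `k` is, up to a phase and the factor `r²`, that of `f`
at `r k`, while the weight `|k| |P_tr(k) n|²` is homogeneous of degree one. Hence the integrand at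
`k` is `r³` times the unscaled integrand at `r k`, and the substitution `k ↦ r k` absorbs `r³`. -/

open MeasureTheory Filter Topology Real Set Metric
open scoped InnerProductSpace

noncomputable section

local notation "ℝ³" => EuclideanSpace ℝ (Fin 3)

open Complex Module

section AngularFourier

variable {E : Type*} [NormedAddCommGroup E] [InnerProductSpace ℝ E] [MeasureSpace E]

/-- The physicists' Fourier transform `ĝ(k) = ∫ e^{-i⟪k, x⟫} g(x) dx`, without Mathlib's `2π`. -/
def angularFourier (g : E → ℂ) (k : E) : ℂ :=
  ∫ x, exp (-I * (⟪k, x⟫_ℝ : ℂ)) * g x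

theorem angularFourier_comp_sub [MeasurableAdd E] [(volume : Measure E).IsAddRightInvariant]
    (g : E → ℂ) (a k : E) :
    angularFourier (fun x ↦ g (x - a)) k
      = exp (-I * (⟪k, a⟫_ℝ : ℂ)) * angularFourier g k := by
  unfold angularFourier
  rw [← integral_add_right_eq_self _ a, ← integral_const_mul]
  congr 1 with x
  dsimp only
  rw [add_sub_cancel_right, inner_add_right, ofReal_add, mul_add, Complex.exp_add]
  ring

theorem norm_angularFourier_comp_sub [MeasurableAdd E] [(volume : Measure E).IsAddRightInvariant]
    (g : E → ℂ) (a k : E) :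
    ‖angularFourier (fun x ↦ g (x - a)) k‖ = ‖angularFourier g k‖ := by
  rw [angularFourier_comp_sub, norm_mul, neg_mul, ← mul_neg, ← ofReal_neg, mul_comm I,
    norm_exp_ofReal_mul_I, one_mul]

variable [FiniteDimensional ℝ E] [BorelSpace E] [(volume : Measure E).IsAddHaarMeasure]

theorem angularFourier_comp_inv_smul (g : E → ℂ) {r : ℝ} (hr : r ≠ 0) (k : E) :
    angularFourier (fun x ↦ g (r⁻¹ • x)) k
      = |r ^ finrank ℝ E| • angularFourier g (r • k) := by
  unfold angularFourier
  rw [← Measure.integral_comp_inv_smul]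
  congr 1 with x
  rw [real_inner_smul_left, real_inner_smul_right, mul_inv_cancel_left₀ hr]

theorem norm_angularFourier_dilate_translate (g : E → ℂ) (c : ℂ) (a : E) {r : ℝ}
    (hr : r ≠ 0) (k : E) :
    ‖angularFourier (fun x ↦ c * g (r⁻¹ • (x - a))) k‖
      = ‖c‖ * |r| ^ finrank ℝ E * ‖angularFourier g (r • k)‖ := by
  have hconst : angularFourier (fun x ↦ c * g (r⁻¹ • (x - a))) k
      = c * angularFourier (fun x ↦ g (r⁻¹ • (x - a))) k := by
    rw [angularFourier, angularFourier, ← integral_const_mul]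
    congr 1 with x
    ring
  rw [hconst, norm_mul, norm_angularFourier_comp_sub (fun y ↦ g (r⁻¹ • y)),
    angularFourier_comp_inv_smul g hr, norm_smul, Real.norm_eq_abs, abs_abs, abs_pow, mul_assoc]

end AngularFourier

section TransverseWeight

variable {E : Type*} [NormedAddCommGroup E] [InnerProductSpace ℝ E]

/-- `|k| |P_tr(k) n|²`, with `P_tr(k)` the orthogonal projection onto `k^⊥`. -/
def transverseWeight (n k : E) : ℝ :=
  ‖k‖ * ‖n - ⟪NormedSpace.normalize k, n⟫_ℝ • NormedSpace.normalize k‖ ^ 2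

theorem transverseWeight_smul_of_pos (n : E) {r : ℝ} (hr : 0 < r) (k : E) :
    transverseWeight n (r • k) = r * transverseWeight n k := by
  rw [transverseWeight, transverseWeight, NormedSpace.normalize_smul_of_pos hr, norm_smul,
    Real.norm_of_nonneg hr.le, mul_assoc]

end TransverseWeight

theorem stmt_12_general (f : SchwartzMap (EuclideanSpace ℝ (Fin 3)) ℝ)
    (n : ℝ³) :
    ∀ r : ℝ, 0 < r →
      (∫ k : ℝ³, ‖k‖ * ‖n - ⟪‖k‖⁻¹ • k, n⟫_ℝ • (‖k‖⁻¹ • k)‖ ^ 2 *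
          ‖∫ x : ℝ³, Complex.exp (-Complex.I * (⟪k, x⟫_ℝ : ℂ)) *
            (((1 / r) * f ((1 / r) • (x - r • n)) : ℝ) : ℂ)‖ ^ 2)
      = ∫ k : ℝ³, ‖k‖ * ‖n - ⟪‖k‖⁻¹ • k, n⟫_ℝ • (‖k‖⁻¹ • k)‖ ^ 2 *
          ‖∫ x : ℝ³, Complex.exp (-Complex.I * (⟪k, x⟫_ℝ : ℂ)) * ((f x : ℝ) : ℂ)‖ ^ 2 := by
  intro r hr
  set g : ℝ³ → ℂ := fun x ↦ (f x : ℂ)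
  have hscaled : (fun x : ℝ³ ↦ (((1 / r) * f ((1 / r) • (x - r • n)) : ℝ) : ℂ))
      = fun x ↦ ((r⁻¹ : ℝ) : ℂ) * g (r⁻¹ • (x - r • n)) := by
    simp [g]
  have hdim : finrank ℝ ℝ³ = 3 := finrank_euclideanSpace_fin
  have hintegrand (k : ℝ³) :
      transverseWeight n k *
          ‖angularFourier (fun x ↦ ((r⁻¹ : ℝ) : ℂ) * g (r⁻¹ • (x - r • n))) k‖ ^ 2
        = r ^ 3 * (transverseWeight n (r • k) * ‖angularFourier g (r • k)‖ ^ 2) := by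
    rw [norm_angularFourier_dilate_translate g _ _ hr.ne', transverseWeight_smul_of_pos n hr, hdim,
      norm_real, Real.norm_of_nonneg (inv_nonneg.2 hr.le), abs_of_pos hr]
    field_simp
  change ∫ k, transverseWeight n k *
      ‖angularFourier (fun x ↦ (((1 / r) * f ((1 / r) • (x - r • n)) : ℝ) : ℂ)) k‖ ^ 2
    = ∫ k, transverseWeight n k * ‖angularFourier g k‖ ^ 2
  rw [hscaled]
  simp_rw [hintegrand]
  rw [integral_const_mul,
    Measure.integral_comp_smul _ (fun k ↦ transverseWeight n k * ‖angularFourier g k‖ ^ 2), hdim,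
    smul_eq_mul, abs_of_pos (inv_pos.2 (pow_pos hr 3)), mul_inv_cancel_left₀ (pow_ne_zero 3 hr.ne')]

/-- The vacuum fluctuation exponent of the free electric field smeared with the scaled test
function `f_{n,r}(x) = (1/r) f((x − rn)/r)` is independent of `r`. -/
theorem stmt_12 (f : SchwartzMap (EuclideanSpace ℝ (Fin 3)) ℝ)
    (n : ℝ³) (hn : ‖n‖ = 1) :
    ∀ r : ℝ, 0 < r →
      (∫ k : ℝ³, ‖k‖ * ‖n - ⟪‖k‖⁻¹ • k, n⟫_ℝ • (‖k‖⁻¹ • k)‖ ^ 2 *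
          ‖∫ x : ℝ³, Complex.exp (-Complex.I * (⟪k, x⟫_ℝ : ℂ)) *
            (((1 / r) * f ((1 / r) • (x - r • n)) : ℝ) : ℂ)‖ ^ 2)
      = ∫ k : ℝ³, ‖k‖ * ‖n - ⟪‖k‖⁻¹ • k, n⟫_ℝ • (‖k‖⁻¹ • k)‖ ^ 2 *
          ‖∫ x : ℝ³, Complex.exp (-Complex.I * (⟪k, x⟫_ℝ : ℂ)) * ((f x : ℝ) : ℂ)‖ ^ 2 :=
  stmt_12_general f n
end
end

section
/- Let j₀ : ℝ³ → ℝ and f = (f₁,f₂,f₃) : ℝ³ → ℝ³ be smooth and compactly supported, let φ₀ ∈ (0, 2π], and set r̂(φ) = (cos φ, sin φ, 0), φ̂(φ) = (−sin φ, cos φ, 0). Then lim_{L→∞} ∫₀^{φ₀} Σ_{i=1}^{3} φ̂_i(φ) [ ∫_{ℝ³} j₀(x) ( ∫_{ℝ³} ( L / (4π |y + L r̂(φ)|) ) Σ_{j=1}^{3} (∂_i ∂_j f_j)(x − y) dy ) dx ] dφ = 0. -/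
open MeasureTheory Filter Topology Real Set Metric
open scoped InnerProductSpace

noncomputable section

local notation "ℝ³" => EuclideanSpace ℝ (Fin 3)

/-- The radial unit vector `r̂(φ) = (cos φ, sin φ, 0)` in the plane `x₃ = 0`. -/
def rhat (φ : ℝ) : EuclideanSpace ℝ (Fin 3) :=
  (WithLp.equiv 2 (Fin 3 → ℝ)).symm ![Real.cos φ, Real.sin φ, 0]

/-- The angular unit vector `φ̂(φ) = (−sin φ, cos φ, 0)` in the plane `x₃ = 0`. -/
def phihat (φ : ℝ) : EuclideanSpace ℝ (Fin 3) :=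
  (WithLp.equiv 2 (Fin 3 → ℝ)).symm ![-Real.sin φ, Real.cos φ, 0]

/-- The partial derivative `∂_i h` of a scalar function on `ℝ³`. -/
def pderiv3 (i : Fin 3) (h : EuclideanSpace ℝ (Fin 3) → ℝ) (x : EuclideanSpace ℝ (Fin 3)) : ℝ :=
  fderiv ℝ h x (EuclideanSpace.single i 1)

lemma norm_rhat (φ : ℝ) : ‖rhat φ‖ = 1 := by
  rw [EuclideanSpace.norm_eq]
  simp [rhat, Fin.sum_univ_three, WithLp.equiv_symm_apply, PiLp.toLp_apply, Real.norm_eq_abs, sq_abs,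
    Real.cos_sq_add_sin_sq]

lemma abs_phihat_le (φ : ℝ) (i : Fin 3) : |phihat φ i| ≤ 1 := by
  fin_cases i <;>
    simp [phihat, WithLp.equiv_symm_apply, PiLp.toLp_apply, abs_neg, Real.abs_sin_le_one, Real.abs_cos_le_one]

lemma contDiff_pderiv3 {h : ℝ³ → ℝ} (hh : ContDiff ℝ (⊤ : ℕ∞) h) (i : Fin 3) :
    ContDiff ℝ (⊤ : ℕ∞) (pderiv3 i h) :=
  (hh.fderiv_right (m := (⊤ : ℕ∞)) (by simp)).clm_apply contDiff_const

lemma hcs_pderiv3 {h : ℝ³ → ℝ} (hc : HasCompactSupport h) (i : Fin 3) :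
    HasCompactSupport (pderiv3 i h) :=
  (hc.fderiv ℝ).comp_left (g := fun L : ℝ³ →L[ℝ] ℝ => L (EuclideanSpace.single i 1)) rfl

lemma integral_pderiv3_eq_zero {h : ℝ³ → ℝ} (hh : ContDiff ℝ (⊤ : ℕ∞) h)
    (hc : HasCompactSupport h) (i : Fin 3) : ∫ x, pderiv3 i h x = 0 := by
  have hint : Integrable (fun x => fderiv ℝ h x (EuclideanSpace.single i 1)) :=
    ((contDiff_pderiv3 hh i).continuous).integrable_of_hasCompactSupport (hcs_pderiv3 hc i)
  have key := integral_mul_fderiv_eq_neg_fderiv_mul_of_integrable (μ := volume)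
      (f := fun _ : ℝ³ => (1:ℝ)) (g := h) (v := EuclideanSpace.single i 1)
      (by simpa using (integrable_zero ℝ³ ℝ volume))
      (by simpa using hint)
      (by simpa using hh.continuous.integrable_of_hasCompactSupport hc)
      (fun x _ => differentiableAt_const (1:ℝ)) (fun x _ => (hh.differentiable (by simp)).differentiableAt)
  have h1 : ∫ x, pderiv3 i h x = ∫ x, (1:ℝ) * fderiv ℝ h x (EuclideanSpace.single i 1) := by
    simp [pderiv3]
  rw [h1, key]
  simp

lemma support_pderiv3_subset {h : ℝ³ → ℝ} {i : Fin 3} :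
    Function.support (pderiv3 i h) ⊆ tsupport h := by
  intro z hz
  apply support_fderiv_subset ℝ (f := h)
  intro h0
  exact hz (by simp [pderiv3, h0])

lemma main_aux (j₀ : ℝ³ → ℝ) (hjcont : Continuous j₀) (hjc : HasCompactSupport j₀)
    (g : Fin 3 → ℝ³ → ℝ) (hgc : ∀ i, Continuous (g i)) (hgs : ∀ i, HasCompactSupport (g i))
    (hgi : ∀ i, (∫ z : ℝ³, g i z) = 0) (φ₀ : ℝ) :
    Tendsto (fun L : ℝ => ∫ φ in (0 : ℝ)..φ₀, ∑ i : Fin 3, phihat φ i *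
        ∫ x : ℝ³, j₀ x * ∫ y : ℝ³, (L / (4 * π * ‖y + L • rhat φ‖)) * g i (x - y))
      atTop (𝓝 0) := by
  obtain ⟨r, hr⟩ :=
    (IsCompact.union hjc (isCompact_iUnion fun i => hgs i)).isBounded.subset_closedBall 0
  set R : ℝ := max r 1 with hRdef
  have hR1 : (1:ℝ) ≤ R := le_max_right _ _
  have hR0 : (0:ℝ) < R := lt_of_lt_of_le one_pos hR1
  have hjball : tsupport j₀ ⊆ closedBall 0 R :=
    (subset_union_left.trans hr).trans (closedBall_subset_closedBall (le_max_left r 1))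
  have hgball : ∀ i, tsupport (g i) ⊆ closedBall 0 R := fun i =>
    ((subset_iUnion (fun i => tsupport (g i)) i).trans (subset_union_right.trans hr)).trans
      (closedBall_subset_closedBall (le_max_left r 1))
  have hgint : ∀ i, Integrable (g i) := fun i =>
    (hgc i).integrable_of_hasCompactSupport (hgs i)
  have hgabs : ∀ i, Integrable (fun z => |g i z|) := fun i => (hgint i).abs
  have hJ : Integrable j₀ := hjcont.integrable_of_hasCompactSupport hjc
  have hJabs : Integrable (fun x => |j₀ x|) := hJ.abs
  set C : Fin 3 → ℝ := fun i => ∫ z, |g i z| with hCdef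
  have hCnn : ∀ i, 0 ≤ C i := fun i => integral_nonneg fun z => abs_nonneg _
  set Cj : ℝ := ∫ x, |j₀ x| with hCjdef
  have hCjnn : 0 ≤ Cj := integral_nonneg fun x => abs_nonneg _
  set ε : ℝ → ℝ := fun L => 2 * R / (4 * π * (L - 2 * R)) with hεdef
  -- the inner estimate
  have inner_est : ∀ L : ℝ, 4 * R ≤ L → ∀ φ : ℝ, ∀ i : Fin 3, ∀ x : ℝ³, ‖x‖ ≤ R →
      |∫ y : ℝ³, (L / (4 * π * ‖y + L • rhat φ‖)) * g i (x - y)| ≤ ε L * C i := by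
    intro L hL φ i x hx
    have hL2R : 0 < L - 2 * R := by linarith
    have hLpos : 0 < L := by linarith
    have hsmul : ‖L • rhat φ‖ = L := by
      rw [norm_smul, norm_rhat, Real.norm_eq_abs, abs_of_pos hLpos, mul_one]
    -- kernel facts on the support
    have hker : ∀ z : ℝ³, ‖z‖ ≤ R →
        |L / (4 * π * ‖x - z + L • rhat φ‖) - 1 / (4 * π)| ≤ ε L ∧
        L / (4 * π * ‖x - z + L • rhat φ‖) ≤ L / (4 * π * (L - 2 * R)) := by
      intro z hz
      set N : ℝ := ‖x - z + L • rhat φ‖ with hNdef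
      have hxz : ‖x - z‖ ≤ 2 * R := (norm_sub_le _ _).trans (by linarith)
      have hNL : |N - L| ≤ 2 * R := by
        have h' := abs_norm_sub_norm_le (x - z + L • rhat φ) (L • rhat φ)
        rw [add_sub_cancel_right, hsmul] at h'
        exact h'.trans hxz
      have hNge : L - 2 * R ≤ N := by
        have := (abs_le.mp hNL).1
        linarith
      have hNpos : 0 < N := lt_of_lt_of_le hL2R hNge
      constructor
      · have heq : L / (4 * π * N) - 1 / (4 * π) = (L - N) / (4 * π * N) := by
          field_simp
        rw [heq, abs_div, abs_of_pos (by positivity : (0:ℝ) < 4 * π * N)]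
        have habsLN : |L - N| ≤ 2 * R := by rw [abs_sub_comm]; exact hNL
        exact div_le_div₀ (by positivity) habsLN (by positivity)
          (by nlinarith [Real.pi_pos])
      · apply div_le_div_of_nonneg_left (le_of_lt hLpos) (by positivity)
        nlinarith [Real.pi_pos]
    have hεnn : 0 ≤ ε L := by
      have := Real.pi_pos
      positivity
    -- change of variables
    have e1 : (∫ y : ℝ³, (L / (4 * π * ‖y + L • rhat φ‖)) * g i (x - y))
        = ∫ z : ℝ³, (L / (4 * π * ‖x - z + L • rhat φ‖)) * g i z := by
      have := integral_sub_left_eq_self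
        (fun y : ℝ³ => (L / (4 * π * ‖y + L • rhat φ‖)) * g i (x - y)) volume x
      simp only [sub_sub_cancel] at this
      exact this.symm
    -- integrability of the kernel times g i
    have hmeas : AEStronglyMeasurable
        (fun z : ℝ³ => (L / (4 * π * ‖x - z + L • rhat φ‖)) * g i z) volume := by
      apply Measurable.aestronglyMeasurable
      apply Measurable.mul _ (hgc i).measurable
      exact Measurable.div measurable_const
        (by fun_prop : Measurable fun z : ℝ³ => 4 * π * ‖x - z + L • rhat φ‖)
    have hint2 : Integrable (fun z : ℝ³ => (L / (4 * π * ‖x - z + L • rhat φ‖)) * g i z) := by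
      apply Integrable.mono' ((hgabs i).const_mul (L / (4 * π * (L - 2 * R)))) hmeas
      filter_upwards with z
      by_cases hz : g i z = 0
      · simp [hz]
      · have hzR : ‖z‖ ≤ R := by
          have : z ∈ tsupport (g i) := subset_tsupport _ hz
          simpa using hgball i this
        rw [Real.norm_eq_abs, abs_mul]
        apply mul_le_mul_of_nonneg_right _ (abs_nonneg _) |>.trans
          (le_of_eq rfl)
        · rw [abs_of_nonneg (by positivity)]
          exact (hker z hzR).2
    -- subtract the constant
    have e2 : (∫ z : ℝ³, (L / (4 * π * ‖x - z + L • rhat φ‖)) * g i z)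
        = ∫ z : ℝ³, (L / (4 * π * ‖x - z + L • rhat φ‖) - 1 / (4 * π)) * g i z := by
      have : (∫ z : ℝ³, (L / (4 * π * ‖x - z + L • rhat φ‖) - 1 / (4 * π)) * g i z)
          = (∫ z : ℝ³, (L / (4 * π * ‖x - z + L • rhat φ‖)) * g i z)
            - ∫ z : ℝ³, (1 / (4 * π)) * g i z := by
        rw [← integral_sub hint2 ((hgint i).const_mul _)]
        congr 1
        ext z
        ring
      rw [this, integral_const_mul, hgi i, mul_zero, sub_zero]
    rw [e1, e2, ← Real.norm_eq_abs]
    calc ‖∫ z : ℝ³, (L / (4 * π * ‖x - z + L • rhat φ‖) - 1 / (4 * π)) * g i z‖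
        ≤ ∫ z : ℝ³, ‖(L / (4 * π * ‖x - z + L • rhat φ‖) - 1 / (4 * π)) * g i z‖ :=
          norm_integral_le_integral_norm _
      _ ≤ ∫ z : ℝ³, ε L * |g i z| := by
          apply integral_mono_of_nonneg (Filter.Eventually.of_forall fun z => abs_nonneg _)
            ((hgabs i).const_mul _)
          filter_upwards with z
          by_cases hz : g i z = 0
          · simp [hz]
          · have hzR : ‖z‖ ≤ R := by
              have : z ∈ tsupport (g i) := subset_tsupport _ hz
              simpa using hgball i this
            rw [abs_mul]
            exact mul_le_mul_of_nonneg_right (hker z hzR).1 (abs_nonneg _)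
      _ = ε L * C i := integral_const_mul _ _
  -- x-level estimate
  have x_est : ∀ L : ℝ, 4 * R ≤ L → ∀ φ : ℝ, ∀ i : Fin 3,
      |∫ x : ℝ³, j₀ x * ∫ y : ℝ³, (L / (4 * π * ‖y + L • rhat φ‖)) * g i (x - y)|
        ≤ Cj * (ε L * C i) := by
    intro L hL φ i
    have hL2R : 0 < L - 2 * R := by linarith
    have hεnn : 0 ≤ ε L := by
      have := Real.pi_pos
      positivity
    have hbd : ∀ x : ℝ³, |j₀ x * ∫ y : ℝ³, (L / (4 * π * ‖y + L • rhat φ‖)) * g i (x - y)|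
        ≤ |j₀ x| * (ε L * C i) := by
      intro x
      by_cases hx : j₀ x = 0
      · simp [hx]
      · have hxR : ‖x‖ ≤ R := by
          have : x ∈ tsupport j₀ := subset_tsupport _ hx
          simpa using hjball this
        rw [abs_mul]
        exact mul_le_mul_of_nonneg_left (inner_est L hL φ i x hxR) (abs_nonneg _)
    rw [← Real.norm_eq_abs]
    calc ‖∫ x : ℝ³, j₀ x * ∫ y : ℝ³, (L / (4 * π * ‖y + L • rhat φ‖)) * g i (x - y)‖
        ≤ ∫ x : ℝ³, ‖j₀ x * ∫ y : ℝ³, (L / (4 * π * ‖y + L • rhat φ‖)) * g i (x - y)‖ :=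
          norm_integral_le_integral_norm _
      _ ≤ ∫ x : ℝ³, |j₀ x| * (ε L * C i) := by
          apply integral_mono_of_nonneg (Filter.Eventually.of_forall fun x => norm_nonneg _)
            (hJabs.mul_const _)
          exact Filter.Eventually.of_forall hbd
      _ = Cj * (ε L * C i) := by rw [integral_mul_const]
  -- φ-level estimate
  have phi_est : ∀ L : ℝ, 4 * R ≤ L → ∀ φ : ℝ,
      ‖∑ i : Fin 3, phihat φ i *
          ∫ x : ℝ³, j₀ x * ∫ y : ℝ³, (L / (4 * π * ‖y + L • rhat φ‖)) * g i (x - y)‖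
        ≤ ∑ i : Fin 3, Cj * (ε L * C i) := by
    intro L hL φ
    refine (norm_sum_le _ _).trans (Finset.sum_le_sum fun i _ => ?_)
    rw [Real.norm_eq_abs, abs_mul]
    calc |phihat φ i| * |∫ x : ℝ³, j₀ x * ∫ y : ℝ³,
            (L / (4 * π * ‖y + L • rhat φ‖)) * g i (x - y)|
        ≤ 1 * (Cj * (ε L * C i)) :=
          mul_le_mul (abs_phihat_le φ i) (x_est L hL φ i) (abs_nonneg _) zero_le_one
      _ = Cj * (ε L * C i) := one_mul _
  -- limit of the bound
  have hεtend : Tendsto ε atTop (𝓝 0) := by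
    apply Tendsto.div_atTop tendsto_const_nhds
    apply Tendsto.const_mul_atTop (by positivity : (0:ℝ) < 4 * π)
    simpa [sub_eq_add_neg] using tendsto_atTop_add_const_right atTop (-(2*R)) tendsto_id
  apply squeeze_zero_norm' (a := fun L => (∑ i : Fin 3, Cj * (ε L * C i)) * |φ₀ - 0|)
  · filter_upwards [eventually_ge_atTop (4*R)] with L hL
    exact intervalIntegral.norm_integral_le_of_norm_le_const fun φ _ => phi_est L hL φ
  · have heq : (fun L => (∑ i : Fin 3, Cj * (ε L * C i)) * |φ₀ - 0|)
        = fun L => ε L * ((∑ i : Fin 3, Cj * C i) * |φ₀ - 0|) := by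
      funext L
      rw [show (∑ i : Fin 3, Cj * (ε L * C i)) = ε L * ∑ i : Fin 3, Cj * C i by
        rw [Finset.mul_sum]; exact Finset.sum_congr rfl fun i _ => by ring]
      ring
    rw [heq]
    simpa using hεtend.mul_const ((∑ i : Fin 3, Cj * C i) * |φ₀ - 0|)

/-- Vanishing of the longitudinal contribution of the closing arc of the Wilson loop contour. -/
theorem stmt_14 (j₀ : ℝ³ → ℝ) (hj : ContDiff ℝ (⊤ : ℕ∞) j₀) (hjc : HasCompactSupport j₀)
    (f : ℝ³ → ℝ³) (hf : ContDiff ℝ (⊤ : ℕ∞) f) (hfc : HasCompactSupport f)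
    (φ₀ : ℝ) (hφ₀ : φ₀ ∈ Ioc (0 : ℝ) (2 * π)) :
    Tendsto (fun L : ℝ => ∫ φ in (0 : ℝ)..φ₀, ∑ i : Fin 3, phihat φ i *
        ∫ x : ℝ³, j₀ x * ∫ y : ℝ³, (L / (4 * π * ‖y + L • rhat φ‖)) *
          ∑ j : Fin 3, pderiv3 i (pderiv3 j (fun w => f w j)) (x - y))
      atTop (𝓝 0) := by
  have hfj : ∀ j : Fin 3, ContDiff ℝ (⊤ : ℕ∞) (fun w : ℝ³ => f w j) := by
    intro j
    have := (ContinuousLinearMap.contDiff (n := (⊤ : ℕ∞)) (EuclideanSpace.proj (𝕜 := ℝ) j)).comp hf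
    simpa [Function.comp_def] using this
  have hfjc : ∀ j : Fin 3, HasCompactSupport (fun w : ℝ³ => f w j) := fun j =>
    hfc.comp_left (g := fun v : ℝ³ => v j) rfl
  set g : Fin 3 → ℝ³ → ℝ :=
    fun i z => ∑ j : Fin 3, pderiv3 i (pderiv3 j (fun w => f w j)) z with hg
  have hterm_cs : ∀ i j : Fin 3,
      HasCompactSupport (pderiv3 i (pderiv3 j (fun w : ℝ³ => f w j))) :=
    fun i j => hcs_pderiv3 (hcs_pderiv3 (hfjc j) j) i
  have hgc : ∀ i, Continuous (g i) := fun i =>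
    continuous_finset_sum _ fun j _ =>
      (contDiff_pderiv3 (contDiff_pderiv3 (hfj j) j) i).continuous
  have hgs : ∀ i, HasCompactSupport (g i) := by
    intro i
    apply HasCompactSupport.intro
      (isCompact_iUnion fun j : Fin 3 => hterm_cs i j)
    intro x hx
    apply Finset.sum_eq_zero
    intro j _
    by_contra h0
    exact hx (mem_iUnion.mpr ⟨j, subset_tsupport _ h0⟩)
  have hgi : ∀ i, (∫ z : ℝ³, g i z) = 0 := by
    intro i
    rw [integral_finset_sum _ fun j _ =>
      ((contDiff_pderiv3 (contDiff_pderiv3 (hfj j) j) i).continuous).integrable_of_hasCompactSupport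
        (hterm_cs i j)]
    exact Finset.sum_eq_zero fun j _ =>
      integral_pderiv3_eq_zero (contDiff_pderiv3 (hfj j) j) (hcs_pderiv3 (hfjc j) j) i
  exact main_aux j₀ hj.continuous hjc g hgc hgs hgi φ₀
end
end

section
/- Let j₀ : ℝ³ → ℝ be smooth and compactly supported, let g : S² → ℝ be continuous, and let n ∈ S² be a unit vector not contained in the support of g. Then there exists δ ∈ (0,1) such that for every smooth f : ℝ³ → ℝ supported in B(0,δ): lim_{r→∞} ∫_{S²} g(e) [ ∫_{ℝ³} f(x) · r² (n·e) ( ∫₀^∞ j₀(r(n+x) − se) ds ) dx ] dΩ(e) = 0, where dΩ is the spherical (surface) measure on S². -/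
open MeasureTheory Filter Topology Real Set Metric
open scoped InnerProductSpace

noncomputable section

local notation "ℝ³" => EuclideanSpace ℝ (Fin 3)

lemma poly (ε r s : ℝ) (hε : 0 < ε) (hε2 : ε ≤ 2) (hs : 0 ≤ s) (hr : 0 ≤ r) :
    r^2*ε^2/4 ≤ (r-s)^2 + r*s*ε^2 := by
  rcases le_or_gt (ε^2) 3 with h | h
  · nlinarith [sq_nonneg (2*s + r*(ε^2-2)), mul_nonneg (mul_nonneg hr hr) (sq_nonneg ε)]
  · nlinarith [mul_nonneg (mul_nonneg hr hs) (sub_nonneg.mpr h.le), sq_nonneg s,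
      mul_nonneg (mul_nonneg hr hr) (mul_nonneg (sub_nonneg.mpr hε2) (by linarith : (0:ℝ) ≤ 2 + ε))]

lemma key (ε r s : ℝ) (hε : 0 < ε) (hε2 : ε ≤ 2) (hs : 0 ≤ s) (hr : 0 ≤ r)
    (n e : ℝ³) (hn : ‖n‖ = 1) (he : ‖e‖ = 1) (hne : ε ≤ ‖n - e‖) :
    r * ε / 2 ≤ ‖r • n - s • e‖ := by
  have h1 : ‖n - e‖^2 = 2 - 2 * ⟪n, e⟫_ℝ := by
    rw [norm_sub_sq_real, hn, he]; ring
  have h2 : ‖r • n - s • e‖^2 = r^2 + s^2 - 2*(r*s)*⟪n,e⟫_ℝ := by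
    rw [norm_sub_sq_real, norm_smul, norm_smul, real_inner_smul_left, real_inner_smul_right,
      Real.norm_eq_abs, Real.norm_eq_abs, abs_of_nonneg hr, abs_of_nonneg hs, hn, he]; ring
  have hsq : ε^2 ≤ ‖n - e‖^2 := by nlinarith
  have hinner : ⟪n,e⟫_ℝ ≤ 1 - ε^2/2 := by linarith
  have h3 : (r*ε/2)^2 ≤ ‖r • n - s • e‖^2 := by
    have := poly ε r s hε hε2 hs hr
    nlinarith [mul_nonneg hr hs]
  nlinarith [norm_nonneg (r • n - s • e), mul_nonneg (mul_nonneg hr hε.le) (by norm_num : (0:ℝ) ≤ 1/2)]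

/-- The smeared-axial-gauge asymptotic flux vanishes in all directions `n` outside the support
of the angular smearing function `g`. -/
theorem stmt_16 (j₀ : ℝ³ → ℝ) (hj : ContDiff ℝ (⊤ : ℕ∞) j₀) (hjc : HasCompactSupport j₀)
    (g : Metric.sphere (0 : ℝ³) 1 → ℝ) (hg : Continuous g)
    (n : Metric.sphere (0 : ℝ³) 1) (hn : n ∉ tsupport g) :
    ∃ δ ∈ Ioo (0 : ℝ) 1, ∀ f : ℝ³ → ℝ, ContDiff ℝ (⊤ : ℕ∞) f →
      Function.support f ⊆ Metric.ball (0 : ℝ³) δ →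
      Tendsto (fun r : ℝ =>
          ∫ e : Metric.sphere (0 : ℝ³) 1,
            (g e * ∫ x : ℝ³, f x * (r ^ 2 * ⟪(n : ℝ³), (e : ℝ³)⟫_ℝ *
              ∫ s in Ioi (0 : ℝ), j₀ (r • ((n : ℝ³) + x) - s • (e : ℝ³))))
            ∂(volume : Measure ℝ³).toSphere)
        atTop (𝓝 0) := by
  -- find ε > 0 with ball n ε disjoint from tsupport g
  obtain ⟨ε₀, hε₀, hball⟩ := Metric.isOpen_iff.mp (isClosed_tsupport g).isOpen_compl n hn
  set ε : ℝ := min ε₀ 2 with hεdef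
  have hε : 0 < ε := lt_min hε₀ (by norm_num)
  have hε2 : ε ≤ 2 := min_le_right _ _
  have hballε : Metric.ball n ε ⊆ (tsupport g)ᶜ :=
    (Metric.ball_subset_ball (min_le_left _ _)).trans hball
  -- support radius of j₀
  obtain ⟨R, hR⟩ := hjc.isCompact.isBounded.subset_closedBall (0 : ℝ³)
  refine ⟨ε/4, ⟨by linarith, by linarith⟩, ?_⟩
  intro f hf hsupp
  have hnn : ‖(n : ℝ³)‖ = 1 := by
    simpa using mem_sphere_zero_iff_norm.mp n.2
  -- eventual vanishing
  have hev : (fun _ : ℝ => (0:ℝ)) =ᶠ[atTop]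
      (fun r : ℝ =>
        ∫ e : Metric.sphere (0 : ℝ³) 1,
          (g e * ∫ x : ℝ³, f x * (r ^ 2 * ⟪(n : ℝ³), (e : ℝ³)⟫_ℝ *
            ∫ s in Ioi (0 : ℝ), j₀ (r • ((n : ℝ³) + x) - s • (e : ℝ³))))
          ∂(volume : Measure ℝ³).toSphere) := by
    filter_upwards [eventually_ge_atTop (max 0 ((4 * (|R| + 1)) / ε))] with r hr
    have hr0 : 0 ≤ r := le_trans (le_max_left _ _) hr
    have hrR : |R| + 1 ≤ r * ε / 4 := by
      have h4 : (4 * (|R| + 1)) / ε ≤ r := le_trans (le_max_right _ _) hr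
      rw [div_le_iff₀ hε] at h4
      linarith [mul_le_mul_of_nonneg_left hε2 hr0]
    symm
    have hzero : ∀ e : Metric.sphere (0 : ℝ³) 1,
        g e * ∫ x : ℝ³, f x * (r ^ 2 * ⟪(n : ℝ³), (e : ℝ³)⟫_ℝ *
          ∫ s in Ioi (0 : ℝ), j₀ (r • ((n : ℝ³) + x) - s • (e : ℝ³))) = 0 := by
      intro e
      by_cases he : e ∈ tsupport g
      · have hee : ‖(e : ℝ³)‖ = 1 := by simpa using mem_sphere_zero_iff_norm.mp e.2
        have hne : ε ≤ ‖(n : ℝ³) - (e : ℝ³)‖ := by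
          by_contra hlt
          push_neg at hlt
          have : e ∈ Metric.ball n ε := by
            rw [Metric.mem_ball, Subtype.dist_eq, dist_eq_norm, norm_sub_rev]
            exact hlt
          exact hballε this he
        have hxint : (∫ x : ℝ³, f x * (r ^ 2 * ⟪(n : ℝ³), (e : ℝ³)⟫_ℝ *
            ∫ s in Ioi (0 : ℝ), j₀ (r • ((n : ℝ³) + x) - s • (e : ℝ³)))) = 0 := by
          have : ∀ x : ℝ³, f x * (r ^ 2 * ⟪(n : ℝ³), (e : ℝ³)⟫_ℝ *
              ∫ s in Ioi (0 : ℝ), j₀ (r • ((n : ℝ³) + x) - s • (e : ℝ³))) = 0 := by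
            intro x
            by_cases hfx : f x = 0
            · rw [hfx, zero_mul]
            · have hx : ‖x‖ < ε/4 := by
                simpa using hsupp (Function.mem_support.mpr hfx)
              have hsint : (∫ s in Ioi (0 : ℝ),
                  j₀ (r • ((n : ℝ³) + x) - s • (e : ℝ³))) = 0 := by
                rw [setIntegral_congr_fun measurableSet_Ioi
                  (g := fun _ => (0:ℝ)) ?_, integral_zero]
                intro s hs
                have hs0 : 0 ≤ s := (le_of_lt hs)
                have hkey := key ε r s hε hε2 hs0 hr0 (n : ℝ³) (e : ℝ³) hnn hee hne
                have hnormx : ‖r • x‖ ≤ r * (ε/4) := by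
                  rw [norm_smul, Real.norm_eq_abs, abs_of_nonneg hr0]
                  exact mul_le_mul_of_nonneg_left hx.le hr0
                have hrw : r • ((n : ℝ³) + x) - s • (e : ℝ³)
                    = (r • (n : ℝ³) - s • (e : ℝ³)) + r • x := by
                  rw [smul_add]; abel
                have hlow : r * ε / 4 ≤ ‖r • ((n : ℝ³) + x) - s • (e : ℝ³)‖ := by
                  rw [hrw]
                  have := norm_sub_norm_le (r • (n : ℝ³) - s • (e : ℝ³)) (-(r • x))
                  rw [sub_neg_eq_add, norm_neg] at this
                  linarith
                have hnotin : r • ((n : ℝ³) + x) - s • (e : ℝ³) ∉ tsupport j₀ := by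
                  intro hmem
                  have := hR hmem
                  rw [Metric.mem_closedBall, dist_zero_right] at this
                  have : ‖r • ((n : ℝ³) + x) - s • (e : ℝ³)‖ ≤ |R| := this.trans (le_abs_self R)
                  linarith
                exact image_eq_zero_of_notMem_tsupport hnotin
              rw [hsint, mul_zero, mul_zero]
          rw [funext this, integral_zero]
        rw [hxint, mul_zero]
      · rw [image_eq_zero_of_notMem_tsupport he, zero_mul]
    rw [funext hzero]
    exact integral_zero _ _
  exact Tendsto.congr' hev tendsto_const_nhds
end
end

section
/- Let j₀ : ℝ³ → ℝ be smooth and compactly supported. Then for every x ∈ ℝ³, (1/(4π)) ∫_{S²} e · ( ∫₀^∞ j₀(x − se) ds ) dΩ(e) = ∫_{ℝ³} ( (x − y) / (4π |x − y|³) ) j₀(y) dy, as an equality of vectors in ℝ³, where dΩ is the spherical (surface) measure on the unit sphere S² ⊂ ℝ³. -/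
open MeasureTheory Filter Topology Real Set Metric
open scoped InnerProductSpace ENNReal NNReal

noncomputable section

local notation "ℝ³" => EuclideanSpace ℝ (Fin 3)

/-- The axial gauge smeared uniformly over the sphere with weight `1/(4π)` reproduces the
Coulomb gauge: the angular average of the axial-gauge term equals the Newtonian-kernel term. -/
theorem stmt_18 (j₀ : ℝ³ → ℝ) (hj : ContDiff ℝ (⊤ : ℕ∞) j₀) (hjc : HasCompactSupport j₀)
    (x : ℝ³) :
    (1 / (4 * π)) • (∫ e : Metric.sphere (0 : ℝ³) 1,
        (∫ s in Ioi (0 : ℝ), j₀ (x - s • (e : ℝ³))) • (e : ℝ³)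
        ∂(volume : Measure ℝ³).toSphere)
      = ∫ y : ℝ³, (j₀ y / (4 * π * ‖x - y‖ ^ 3)) • (x - y) := by
  have hπ4 : (0:ℝ) < 4 * π := by positivity
  obtain ⟨C, hC⟩ := hjc.exists_bound_of_continuous hj.continuous
  obtain ⟨R₀, hR₀⟩ := hjc.isBounded.subset_closedBall 0
  set R : ℝ := ‖x‖ + R₀ with hR
  set G : ℝ³ → ℝ³ := fun z => (j₀ (x - z) / (4 * π * ‖z‖ ^ 3)) • z with hGdef
  -- the right-hand side equals `∫ z, G z`
  have hRHS : (∫ y : ℝ³, (j₀ y / (4 * π * ‖x - y‖ ^ 3)) • (x - y)) = ∫ z, G z := by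
    rw [← integral_sub_left_eq_self G volume x]
    refine integral_congr_ae (Eventually.of_forall fun y => ?_)
    simp [hGdef, sub_sub_cancel]
  -- norm of `t • e` for `e` on the unit sphere
  have hnorm : ∀ (e : Metric.sphere (0 : ℝ³) 1) (t : ℝ), 0 < t → ‖t • (e : ℝ³)‖ = t := by
    intro e t ht
    rw [norm_smul, mem_sphere_zero_iff_norm.mp e.2, mul_one, Real.norm_eq_abs, abs_of_pos ht]
  -- key algebraic identity
  have hkey : ∀ (e : Metric.sphere (0 : ℝ³) 1) (t : ℝ), 0 < t →
      (t ^ 2 : ℝ) • G (t • (e : ℝ³)) = (j₀ (x - t • (e : ℝ³)) / (4 * π)) • (e : ℝ³) := by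
    intro e t ht
    rw [hGdef]
    simp only
    rw [hnorm e t ht, smul_smul, smul_smul]
    congr 1
    have hπ : π ≠ 0 := Real.pi_ne_zero
    have ht' : t ≠ 0 := ht.ne'
    field_simp
  -- vanishing for large `t`
  have hvan : ∀ (e : Metric.sphere (0 : ℝ³) 1) (t : ℝ), 0 < t → R < t →
      j₀ (x - t • (e : ℝ³)) = 0 := by
    intro e t ht hRt
    by_contra h0
    have hmem : x - t • (e : ℝ³) ∈ tsupport j₀ := subset_tsupport _ h0
    have h1 : ‖x - t • (e : ℝ³)‖ ≤ R₀ := by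
      simpa [dist_eq_norm] using hR₀ hmem
    have h2 : ‖t • (e : ℝ³)‖ - ‖x‖ ≤ ‖t • (e : ℝ³) - x‖ := norm_sub_norm_le _ _
    rw [hnorm e t ht, norm_sub_rev] at h2
    rw [hR] at hRt
    linarith
  -- the map on the product space
  set g : (Metric.sphere (0 : ℝ³) 1) × (Ioi (0:ℝ)) → ℝ³ := fun p => G ((p.2 : ℝ) • (p.1 : ℝ³))
    with hgdef
  have hcont : Continuous g := by
    have h1 : Continuous fun p : (Metric.sphere (0 : ℝ³) 1) × (Ioi (0:ℝ)) =>
        (p.2 : ℝ) • (p.1 : ℝ³) :=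
      (continuous_subtype_val.comp continuous_snd).smul
        (continuous_subtype_val.comp continuous_fst)
    refine Continuous.smul (Continuous.div (hj.continuous.comp (continuous_const.sub h1))
      (continuous_const.mul (h1.norm.pow 3)) fun p => ?_) h1
    show 4 * π * ‖(p.2 : ℝ) • (p.1 : ℝ³)‖ ^ 3 ≠ 0
    rw [hnorm p.1 (p.2 : ℝ) p.2.2]
    have h2 : (0:ℝ) < (p.2 : ℝ) := p.2.2
    positivity
  -- `ν` is the radial measure with density `t ^ 2`
  set ν : Measure (Ioi (0:ℝ)) := Measure.volumeIoiPow 2 with hν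
  have hfr : Module.finrank ℝ ℝ³ - 1 = 2 := by rw [finrank_euclideanSpace_fin]
  have hmp := (volume : Measure ℝ³).measurePreserving_homeomorphUnitSphereProd
  rw [hfr] at hmp
  -- the enorm computation
  have henorm : ∀ (e : Metric.sphere (0 : ℝ³) 1) (t : ℝ), 0 < t →
      ENNReal.ofReal (t ^ 2) * ‖G (t • (e : ℝ³))‖₊ =
        ENNReal.ofReal (|j₀ (x - t • (e : ℝ³))| / (4 * π)) := by
    intro e t ht
    have h1 : ENNReal.ofReal (t ^ 2) = (‖(t^2 : ℝ)‖₊ : ℝ≥0∞) :=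
      (Real.enorm_eq_ofReal (by positivity)).symm
    have he1 : ‖(e : ℝ³)‖₊ = 1 := by
      ext; simp [coe_nnnorm, mem_sphere_zero_iff_norm.mp e.2]
    rw [h1, ← ENNReal.coe_mul, ← nnnorm_smul, hkey e t ht, nnnorm_smul, he1, mul_one,
      ← enorm_eq_nnnorm, Real.enorm_eq_ofReal_abs, abs_div, abs_of_pos hπ4]
  -- integrability on the product space
  have hint : Integrable g (((volume : Measure ℝ³).toSphere).prod ν) := by
    refine ⟨hcont.aestronglyMeasurable, ?_⟩
    rw [HasFiniteIntegral,
      lintegral_prod _ hcont.measurable.enorm.aemeasurable]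
    have hb : ∀ e : Metric.sphere (0 : ℝ³) 1,
        (∫⁻ t : Ioi (0:ℝ), ‖g (e, t)‖₊ ∂ν) ≤
          ENNReal.ofReal (|C| / (4 * π)) * ENNReal.ofReal R := by
      intro e
      have hmeas : Measurable fun t : Ioi (0:ℝ) => (‖g (e, t)‖₊ : ℝ≥0∞) :=
        (hcont.comp (Continuous.prodMk_right e)).measurable.enorm
      rw [hν, Measure.volumeIoiPow,
        lintegral_withDensity_eq_lintegral_mul _
          ((measurable_subtype_coe.pow_const 2).ennreal_ofReal) hmeas]
      have heq : (∫⁻ t : Ioi (0:ℝ),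
            ((fun r : Ioi (0:ℝ) => ENNReal.ofReal (r.1 ^ 2)) *
              fun t : Ioi (0:ℝ) => (‖g (e, t)‖₊ : ℝ≥0∞)) t
            ∂(Measure.comap Subtype.val volume)) =
          ∫⁻ t in Ioi (0:ℝ), ENNReal.ofReal (t ^ 2) * ‖G (t • (e : ℝ³))‖₊ := by
        have h' := setLIntegral_subtype (μ := (volume : Measure ℝ)) (measurableSet_Ioi (a := (0:ℝ))) univ
          (fun t : ℝ => ENNReal.ofReal (t ^ 2) * ‖G (t • (e : ℝ³))‖₊)
        rw [Measure.restrict_univ, image_univ, Subtype.range_coe] at h'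
        rw [← h']
        refine lintegral_congr fun t => ?_
        simp [hgdef]
      rw [heq]
      have hle : (∫⁻ t in Ioi (0:ℝ), ENNReal.ofReal (t ^ 2) * ‖G (t • (e : ℝ³))‖₊) ≤
          ∫⁻ t in Ioi (0:ℝ),
            (Ioc (0:ℝ) R).indicator (fun _ => ENNReal.ofReal (|C| / (4 * π))) t := by
        refine lintegral_mono_ae ?_
        filter_upwards [ae_restrict_mem measurableSet_Ioi] with t ht
        rw [henorm e t ht]
        by_cases htR : t ≤ R
        · rw [Set.indicator_of_mem (show t ∈ Ioc (0:ℝ) R from ⟨ht, htR⟩)]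
          refine ENNReal.ofReal_le_ofReal ?_
          have : |j₀ (x - t • (e : ℝ³))| ≤ |C| := (hC _).trans (le_abs_self C)
          gcongr
        · rw [hvan e t ht (lt_of_not_ge htR)]
          simp
      refine hle.trans ?_
      rw [lintegral_indicator measurableSet_Ioc, setLIntegral_const,
        Measure.restrict_apply measurableSet_Ioc]
      have : (volume : Measure ℝ) (Ioc (0:ℝ) R ∩ Ioi 0) ≤ ENNReal.ofReal R := by
        refine le_trans (measure_mono inter_subset_left) ?_
        rw [Real.volume_Ioc]
        exact ENNReal.ofReal_le_ofReal (by linarith)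
      exact mul_le_mul_right this _
    calc (∫⁻ e, ∫⁻ t : Ioi (0:ℝ), ‖g (e, t)‖₊ ∂ν ∂(volume : Measure ℝ³).toSphere)
        ≤ ∫⁻ _, ENNReal.ofReal (|C| / (4 * π)) * ENNReal.ofReal R
            ∂(volume : Measure ℝ³).toSphere := lintegral_mono hb
      _ = (ENNReal.ofReal (|C| / (4 * π)) * ENNReal.ofReal R) *
            ((volume : Measure ℝ³).toSphere univ) := lintegral_const _
      _ < ⊤ := by
          refine ENNReal.mul_lt_top (ENNReal.mul_lt_top ?_ ?_) ?_
          · exact ENNReal.ofReal_lt_top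
          · exact ENNReal.ofReal_lt_top
          · exact measure_lt_top _ _
  -- main computation
  rw [hRHS]
  calc (1 / (4 * π)) • (∫ e : Metric.sphere (0 : ℝ³) 1,
          (∫ s in Ioi (0 : ℝ), j₀ (x - s • (e : ℝ³))) • (e : ℝ³)
          ∂(volume : Measure ℝ³).toSphere)
      = ∫ e : Metric.sphere (0 : ℝ³) 1,
          (1 / (4 * π) * ∫ s in Ioi (0 : ℝ), j₀ (x - s • (e : ℝ³))) • (e : ℝ³)
          ∂(volume : Measure ℝ³).toSphere := by
        rw [← integral_smul]
        exact integral_congr_ae (Eventually.of_forall fun e => (smul_smul _ _ _))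
    _ = ∫ e : Metric.sphere (0 : ℝ³) 1, (∫ t : Ioi (0:ℝ), g (e, t) ∂ν)
          ∂(volume : Measure ℝ³).toSphere := by
        refine integral_congr_ae (Eventually.of_forall fun e => ?_)
        have hmeas2 : Measurable fun r : Ioi (0:ℝ) => (r.1 ^ 2).toNNReal :=
          (measurable_subtype_coe.pow_const 2).real_toNNReal
        rw [hν, Measure.volumeIoiPow]
        simp only [ENNReal.ofReal]
        rw [integral_withDensity_eq_integral_smul hmeas2 (fun t : Ioi (0:ℝ) => g (e, t))]
        have : (∫ t : Ioi (0:ℝ), (t.1 ^ 2).toNNReal • g (e, t)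
              ∂(Measure.comap Subtype.val volume)) =
            ∫ t in Ioi (0:ℝ), (t ^ 2).toNNReal • G (t • (e : ℝ³)) := by
          rw [← integral_subtype_comap measurableSet_Ioi
            (fun t : ℝ => (t ^ 2).toNNReal • G (t • (e : ℝ³)))]
        rw [this, setIntegral_congr_fun measurableSet_Ioi
          (g := fun t : ℝ => (j₀ (x - t • (e : ℝ³)) / (4 * π)) • (e : ℝ³))
          (fun t ht => by
            rw [NNReal.smul_def, Real.coe_toNNReal _ (by positivity), hkey e t ht]),
          integral_smul_const]
        congr 1
        rw [integral_div]
        ring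
    _ = ∫ p : (Metric.sphere (0 : ℝ³) 1) × (Ioi (0:ℝ)), g p
          ∂(((volume : Measure ℝ³).toSphere).prod ν) := (integral_prod g hint).symm
    _ = ∫ z : ({(0:ℝ³)}ᶜ : Set ℝ³), G z ∂(Measure.comap Subtype.val volume) := by
        rw [← hmp.integral_comp (Homeomorph.measurableEmbedding _) g]
        refine integral_congr_ae (Eventually.of_forall fun z => ?_)
        show G ((‖(z : ℝ³)‖ / 1 : ℝ) • ((1:ℝ) • ‖(z : ℝ³)‖⁻¹ • (z : ℝ³))) = G (z : ℝ³)
        rw [div_one, one_smul, smul_inv_smul₀ (norm_ne_zero_iff.2 z.2)]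
    _ = ∫ z, G z := by
        rw [integral_subtype_comap (measurableSet_singleton (0:ℝ³)).compl G,
          restrict_compl_singleton]
end
end
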